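/- arXiv:1509.04198 — 5 statements merged into one kernel-verified Lean document; each statement's English description precedes it below -/
import Mathlib

section
/- Let E be either ℂ or ℂ ∖ {0}, let S₀ be a closed discrete subset of E, let N ≥ 1 be an integer and ε₀ > 0. Let f, g : E × (0, ε₀] → ℂ, and let f₀, …, f_{N−1}, g₀, …, g_{N−1} be meromorphic functions on E. Assume: (i) for every ε ∈ (0, ε₀], the functions λ ↦ f(λ, ε) and λ ↦ g(λ, ε) are meromorphic on E with all poles contained in S₀ (in particular holomorphic on E ∖ S₀); (ii) for every ε ∈ (0, ε₀], the function h(λ, ε) := f(λ, ε)·g(λ, ε) extends holomorphically to all of E; (iii) for every compact K ⊆ E ∖ S₀ there exist C_K > 0 and ε_K ∈ (0, ε₀] such that for all ε ∈ (0, ε_K], sup_{λ∈K} |f(λ,ε) − ∑_{j=0}^{N−1} ε^j f_j(λ)| ≤ C_K ε^N and sup_{λ∈K} |g(λ,ε) − ∑_{j=0}^{N−1} ε^j g_j(λ)| ≤ C_K ε^N. Then there exist holomorphic functions h₀, …, h_{N−1} on E such that for every compact K ⊆ E there exist C′_K > 0 and ε′_K ∈ (0, ε₀] with sup_{λ∈K}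 |h(λ,ε) − ∑_{j=0}^{N−1} ε^j h_j(λ)| ≤ C′_K ε^N for all ε ∈ (0, ε′_K]. -/
set_option maxHeartbeats 2000000
open Metric Filter Finset Topology

lemma aux_sum_cauchy (t : ℕ → ℕ → ℂ) (N : ℕ) (ε : ℂ) :
    ∑ m ∈ Finset.range N, ∑ i ∈ Finset.range (m+1), ε^m * t i (m-i)
      = ∑ p ∈ (Finset.range N ×ˢ Finset.range N).filter (fun p => p.1+p.2 < N),
          ε^(p.1+p.2) * t p.1 p.2 := by
  rw [Finset.sum_sigma' (Finset.range N) (fun m => Finset.range (m+1))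
      (fun m i => ε^m * t i (m-i))]
  refine Finset.sum_nbij' (fun x => (x.2, x.1 - x.2)) (fun p => ⟨p.1+p.2, p.1⟩)
    ?_ ?_ ?_ ?_ ?_
  · rintro ⟨m, i⟩ hx
    simp only [Finset.mem_sigma, Finset.mem_range] at hx
    simp only [Finset.mem_filter, Finset.mem_product, Finset.mem_range]
    omega
  · rintro ⟨a, b⟩ hp
    simp only [Finset.mem_filter, Finset.mem_product, Finset.mem_range] at hp
    simp only [Finset.mem_sigma, Finset.mem_range]
    omega
  · rintro ⟨m, i⟩ hx
    simp only [Finset.mem_sigma, Finset.mem_range] at hx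
    have hi : i ≤ m := Nat.lt_succ_iff.1 hx.2
    simp [Nat.add_sub_cancel' hi]
  · rintro ⟨a, b⟩ hp
    simp
  · rintro ⟨m, i⟩ hx
    simp only [Finset.mem_sigma, Finset.mem_range] at hx
    have hi : i ≤ m := Nat.lt_succ_iff.1 hx.2
    simp [Nat.add_sub_cancel' hi]

lemma aux_vdm {K : Set ℂ} {cs : ℕ → ℂ → ℂ} {u : ℂ → ℝ → ℂ}
    {N : ℕ} {C εK : ℝ} (hεK : 0 < εK)
    (hbdd : ∀ ε ∈ Set.Ioc (0:ℝ) εK, ∃ M, ∀ z ∈ K, ‖u z ε‖ ≤ M)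
    (hexp : ∀ ε ∈ Set.Ioc (0:ℝ) εK, ∀ z ∈ K,
      ‖u z ε - ∑ j ∈ Finset.range N, (ε:ℂ)^j * cs j z‖ ≤ C * ε ^ N) :
    ∀ j < N, ∃ B, ∀ z ∈ K, ‖cs j z‖ ≤ B := by
  rcases Set.eq_empty_or_nonempty K with rfl | ⟨z₀, hz₀⟩
  · exact fun j _ => ⟨0, by simp⟩
  have hC0 : 0 ≤ C := by
    have h1 := hexp εK ⟨hεK, le_refl _⟩ z₀ hz₀
    have h2 : (0:ℝ) ≤ C * εK ^ N := le_trans (norm_nonneg _) h1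
    nlinarith [pow_pos hεK N]
  intro j hj
  set εs : Fin N → ℝ := fun i => εK / ((i:ℕ)+1) with hεs
  have hεsmem : ∀ i, εs i ∈ Set.Ioc (0:ℝ) εK := by
    intro i
    constructor
    · positivity
    · rw [div_le_iff₀ (by positivity)]
      nlinarith [mul_nonneg hεK.le (Nat.cast_nonneg (i:ℕ))]
  choose M hM using fun i => hbdd (εs i) (hεsmem i)
  set A : Matrix (Fin N) (Fin N) ℂ := Matrix.vandermonde (fun i => ((εs i : ℝ) : ℂ)) with hA
  have hdet : IsUnit A.det := by
    rw [isUnit_iff_ne_zero, Matrix.det_vandermonde_ne_zero_iff]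
    intro a b hab
    have hab' : εs a = εs b := Complex.ofReal_injective hab
    simp only [hεs] at hab'
    rw [div_eq_div_iff (by positivity) (by positivity)] at hab'
    have h2 : ((a:ℕ):ℝ) = ((b:ℕ):ℝ) := by nlinarith
    exact Fin.ext (by exact_mod_cast h2)
  refine ⟨∑ i, ‖(A⁻¹) ⟨j, hj⟩ i‖ * (M i + C * εK ^ N), fun z hz => ?_⟩
  set v : Fin N → ℂ := fun k => cs (k:ℕ) z with hv
  have hkey : ∀ (a b : ℂ), ‖b‖ ≤ ‖a‖ + ‖a - b‖ := by
    intro a b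
    calc ‖b‖ = ‖a - (a - b)‖ := by rw [sub_sub_cancel]
      _ ≤ ‖a‖ + ‖a - b‖ := norm_sub_le _ _
  have hw : ∀ i, ‖A.mulVec v i‖ ≤ M i + C * εK ^ N := by
    intro i
    have hmv : A.mulVec v i = ∑ k ∈ Finset.range N, ((εs i : ℝ):ℂ)^k * cs k z := by
      rw [← Fin.sum_univ_eq_sum_range (fun k => ((εs i : ℝ):ℂ)^k * cs k z) N]
      simp [Matrix.mulVec, dotProduct, hA, Matrix.vandermonde, hv]
    rw [hmv]
    have h1 := hexp (εs i) (hεsmem i) z hz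
    have h2 := hM i z hz
    refine le_trans (hkey (u z (εs i)) _) (le_trans (add_le_add h2 h1) ?_)
    have := pow_le_pow_left₀ (hεsmem i).1.le (hεsmem i).2 N
    nlinarith
  have hvv : v = (A⁻¹).mulVec (A.mulVec v) := by
    rw [Matrix.mulVec_mulVec, Matrix.nonsing_inv_mul A hdet, Matrix.one_mulVec]
  have hcs : cs j z = ∑ i, (A⁻¹) ⟨j, hj⟩ i * (A.mulVec v) i := by
    conv_lhs => rw [show cs j z = v ⟨j, hj⟩ from rfl, hvv]
    rfl
  rw [hcs]
  calc ‖∑ i, (A⁻¹) ⟨j, hj⟩ i * (A.mulVec v) i‖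
      ≤ ∑ i, ‖(A⁻¹) ⟨j, hj⟩ i * (A.mulVec v) i‖ := norm_sum_le _ _
    _ ≤ ∑ i, ‖(A⁻¹) ⟨j, hj⟩ i‖ * (M i + C * εK ^ N) := by
        refine Finset.sum_le_sum fun i _ => ?_
        rw [norm_mul]
        exact mul_le_mul_of_nonneg_left (hw i) (norm_nonneg _)


lemma aux_max {E S₀ : Set ℂ} (hEopen : IsOpen E) (hS₀E : S₀ ⊆ E)
    (hS₀ : ∀ z ∈ E, ∃ r > 0, ∀ w ∈ S₀, w ∈ Metric.ball z r → w = z)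
    {K : Set ℂ} (hKE : K ⊆ E) (hK : IsCompact K) :
    ∃ K'' : Set ℂ, IsCompact K'' ∧ K'' ⊆ E \ S₀ ∧
      ∀ φ : ℂ → ℂ, DifferentiableOn ℂ φ E → ∀ M : ℝ,
        (∀ w ∈ K'', ‖φ w‖ ≤ M) → ∀ z ∈ K, ‖φ z‖ ≤ M := by
  obtain ⟨δ, hδ, hδE⟩ := hK.exists_cthickening_subset_open hEopen hKE
  set T : Set ℂ := S₀ ∩ Metric.cthickening (δ/2) K with hTdef
  have hthick : Metric.cthickening (δ/2) K ⊆ E :=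
    le_trans (Metric.cthickening_mono (by linarith) K) hδE
  have hTE : T ⊆ E := fun x hx => hS₀E hx.1
  have hTclosed : IsClosed T := by
    rw [← closure_subset_iff_isClosed]
    intro x hx
    have hxth : x ∈ Metric.cthickening (δ/2) K :=
      Metric.isClosed_cthickening.closure_subset
        (closure_mono Set.inter_subset_right hx)
    have hxE : x ∈ E := hthick hxth
    obtain ⟨r, hr, hrp⟩ := hS₀ x hxE
    obtain ⟨y, hyT, hyd⟩ := Metric.mem_closure_iff.1 hx r hr
    have : y = x := hrp y hyT.1 (by rwa [Metric.mem_ball, dist_comm])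
    subst this
    exact ⟨hyT.1, hxth⟩
  have hrsel : ∀ x ∈ T, ∃ r > 0, ∀ w ∈ S₀, w ∈ Metric.ball x r → w = x :=
    fun x hx => hS₀ x (hTE hx)
  choose! r hr0 hrprop using hrsel
  have hTcpt : IsCompact T :=
    isCompact_of_isClosed_isBounded hTclosed
      (hK.isBounded.cthickening.subset Set.inter_subset_right)
  have hTfin : T.Finite := by
    obtain ⟨T', hT'sub, hT'fin, hcover⟩ :=
      hTcpt.elim_finite_subcover_image (b := T) (c := fun x => Metric.ball x (r x))
        (fun x _ => isOpen_ball)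
        (fun y hy => Set.mem_biUnion hy (mem_ball_self (hr0 y hy)))
    refine hT'fin.subset fun y hy => ?_
    obtain ⟨x, hxT', hyball⟩ := Set.mem_iUnion₂.1 (hcover hy)
    have := hrprop x (hT'sub hxT') y hy.1 hyball
    subst this
    exact hxT'
  set ρ : ℂ → ℝ := fun x => min (δ/4) (r x / 2) with hρdef
  have hρ0 : ∀ x ∈ T, 0 < ρ x := fun x hx => lt_min (by linarith) (by linarith [hr0 x hx])
  have hρδ : ∀ x, ρ x ≤ δ/4 := fun x => min_le_left _ _
  have hρr : ∀ x ∈ T, ρ x < r x := fun x hx =>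
    lt_of_le_of_lt (min_le_right _ _) (by linarith [hr0 x hx])
  have hballE : ∀ s ∈ T, Metric.closedBall s (ρ s) ⊆ E := by
    intro s hs
    refine le_trans (Metric.closedBall_subset_cthickening hs.2 (ρ s)) ?_
    refine le_trans (Metric.cthickening_cthickening_subset (hρ0 s hs).le (by linarith) K) ?_
    exact le_trans (Metric.cthickening_mono (by linarith [hρδ s]) K) hδE
  have hballS : ∀ s ∈ T, ∀ w ∈ S₀, w ∈ Metric.closedBall s (ρ s) → w = s := by
    intro s hs w hw hwball
    refine hrprop s hs w hw ?_
    rw [Metric.mem_ball]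
    exact lt_of_le_of_lt (Metric.mem_closedBall.1 hwball) (hρr s hs)
  refine ⟨(K \ ⋃ x ∈ T, Metric.ball x (ρ x)) ∪ ⋃ x ∈ T, Metric.sphere x (ρ x),
    ?_, ?_, ?_⟩
  · exact (hK.diff (isOpen_biUnion fun x _ => isOpen_ball)).union
      (hTfin.isCompact_biUnion fun x _ => isCompact_sphere _ _)
  · rintro w (⟨hwK, hwU⟩ | hwS)
    · refine ⟨hKE hwK, fun hwS₀ => hwU ?_⟩
      have hwT : w ∈ T := ⟨hwS₀, Metric.self_subset_cthickening K hwK⟩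
      exact Set.mem_biUnion hwT (mem_ball_self (hρ0 w hwT))
    · obtain ⟨s, hsT, hws⟩ := Set.mem_iUnion₂.1 hwS
      refine ⟨hballE s hsT (Metric.sphere_subset_closedBall hws), fun hwS₀ => ?_⟩
      have := hballS s hsT w hwS₀ (Metric.sphere_subset_closedBall hws)
      subst this
      have : dist w w = ρ w := Metric.mem_sphere.1 hws
      rw [dist_self] at this
      exact absurd this.symm (ne_of_gt (hρ0 w hsT))
  · intro φ hφ M hM z hz
    by_cases hzb : z ∈ ⋃ x ∈ T, Metric.ball x (ρ x)
    · obtain ⟨s, hsT, hzball⟩ := Set.mem_iUnion₂.1 hzb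
      have hρs := hρ0 s hsT
      refine Complex.norm_le_of_forall_mem_frontier_norm_le
        Metric.isBounded_ball ?_ ?_ (subset_closure hzball)
      · refine (hφ.mono ?_).diffContOnCl
        rw [closure_ball s hρs.ne']
        exact hballE s hsT
      · rw [frontier_ball s hρs.ne']
        intro w hw
        exact hM w (Set.mem_union_right _ (Set.mem_biUnion hsT hw))
    · exact hM z (Set.mem_union_left _ ⟨hz, hzb⟩)



/-- Lemma on products of asymptotic expansions.  `E` is either
`ℂ` or `ℂ \ {0}`, `S₀ ⊆ E` is closed and discrete in `E`.  For each
`ε ∈ (0, ε₀]`, `f(·, ε)` and `g(·, ε)` are meromorphic on `E` with all poles in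
`S₀` (holomorphic on `E \ S₀`, and at each point of `S₀` they have a removable
singularity or a pole, which is exactly `MeromorphicAt`); the product
`h = f·g` extends holomorphically to `E` (the extension being the given
function `h`, which agrees with `f·g` on `E \ S₀`).  If `f` and `g` admit
expansions in powers of `ε` to order `N`, with meromorphic coefficients,
locally uniformly on `E \ S₀`, then `h` admits an expansion in powers of `ε`
to order `N` with holomorphic coefficients, locally uniformly on all of `E`. -/
theorem product_of_expansions_is_holomorphic_expansion
    (E : Set ℂ) (hE : E = Set.univ ∨ E = {(0 : ℂ)}ᶜ)
    (S₀ : Set ℂ) (hS₀E : S₀ ⊆ E)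
    (hS₀ : ∀ z ∈ E, ∃ r > 0, ∀ w ∈ S₀, w ∈ Metric.ball z r → w = z)
    (N : ℕ) (hN : 1 ≤ N) (ε₀ : ℝ) (hε₀ : 0 < ε₀)
    (f g h : ℂ → ℝ → ℂ) (fs gs : ℕ → ℂ → ℂ)
    (hfs : ∀ j < N, MeromorphicOn (fs j) E)
    (hgs : ∀ j < N, MeromorphicOn (gs j) E)
    (hf : ∀ ε ∈ Set.Ioc (0 : ℝ) ε₀,
      DifferentiableOn ℂ (fun z => f z ε) (E \ S₀) ∧
        ∀ z ∈ S₀, MeromorphicAt (fun w => f w ε) z)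
    (hg : ∀ ε ∈ Set.Ioc (0 : ℝ) ε₀,
      DifferentiableOn ℂ (fun z => g z ε) (E \ S₀) ∧
        ∀ z ∈ S₀, MeromorphicAt (fun w => g w ε) z)
    (hh_holo : ∀ ε ∈ Set.Ioc (0 : ℝ) ε₀, DifferentiableOn ℂ (fun z => h z ε) E)
    (hh_eq : ∀ ε ∈ Set.Ioc (0 : ℝ) ε₀, ∀ z ∈ E \ S₀, h z ε = f z ε * g z ε)
    (hf_exp : ∀ K : Set ℂ, K ⊆ E \ S₀ → IsCompact K →
      ∃ C > 0, ∃ εK ∈ Set.Ioc (0 : ℝ) ε₀, ∀ ε ∈ Set.Ioc (0 : ℝ) εK, ∀ z ∈ K,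
        ‖f z ε - ∑ j ∈ Finset.range N, (ε : ℂ) ^ j * fs j z‖ ≤ C * ε ^ N)
    (hg_exp : ∀ K : Set ℂ, K ⊆ E \ S₀ → IsCompact K →
      ∃ C > 0, ∃ εK ∈ Set.Ioc (0 : ℝ) ε₀, ∀ ε ∈ Set.Ioc (0 : ℝ) εK, ∀ z ∈ K,
        ‖g z ε - ∑ j ∈ Finset.range N, (ε : ℂ) ^ j * gs j z‖ ≤ C * ε ^ N) :
    ∃ hs : ℕ → ℂ → ℂ, (∀ j < N, DifferentiableOn ℂ (hs j) E) ∧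
      ∀ K : Set ℂ, K ⊆ E → IsCompact K →
        ∃ C > 0, ∃ εK ∈ Set.Ioc (0 : ℝ) ε₀, ∀ ε ∈ Set.Ioc (0 : ℝ) εK, ∀ z ∈ K,
          ‖h z ε - ∑ j ∈ Finset.range N, (ε : ℂ) ^ j * hs j z‖ ≤ C * ε ^ N := by
  -- E is open
  have hEopen : IsOpen E := by
    rcases hE with rfl | rfl
    · exact isOpen_univ
    · exact isOpen_compl_singleton
  -- the Cauchy-product coefficients
  set hc : ℕ → ℂ → ℂ := fun m z => ∑ i ∈ Finset.range (m+1), fs i z * gs (m-i) z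
    with hc_def
  -- Step B : expansion of h with coefficients hc on compacts of E \ S₀
  have stepB : ∀ K : Set ℂ, K ⊆ E \ S₀ → IsCompact K →
      ∃ C > 0, ∃ εK, εK ∈ Set.Ioc (0:ℝ) ε₀ ∧ εK ≤ 1 ∧
        (∀ m < N, ∀ z ∈ K, ‖hc m z‖ ≤ C) ∧
        (∀ ε ∈ Set.Ioc (0:ℝ) εK, ∀ z ∈ K,
          ‖h z ε - ∑ m ∈ Finset.range N, (ε:ℂ)^m * hc m z‖ ≤ C * ε ^ N) := by
    intro K hKsub hK
    rcases Set.eq_empty_or_nonempty K with rfl | ⟨z₀, hz₀⟩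
    · exact ⟨1, one_pos, min ε₀ 1, ⟨lt_min hε₀ one_pos, min_le_left _ _⟩,
        min_le_right _ _, by simp, by simp⟩
    obtain ⟨Cf, hCf, εf, hεf, hfe⟩ := hf_exp K hKsub hK
    obtain ⟨Cg, hCg, εg, hεg, hge⟩ := hg_exp K hKsub hK
    have hfbdd : ∀ ε ∈ Set.Ioc (0:ℝ) εf, ∃ M, ∀ z ∈ K, ‖f z ε‖ ≤ M := fun ε hε =>
      hK.exists_bound_of_continuousOn
        (((hf ε ⟨hε.1, le_trans hε.2 hεf.2⟩).1.continuousOn).mono hKsub)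
    have hgbdd : ∀ ε ∈ Set.Ioc (0:ℝ) εg, ∃ M, ∀ z ∈ K, ‖g z ε‖ ≤ M := fun ε hε =>
      hK.exists_bound_of_continuousOn
        (((hg ε ⟨hε.1, le_trans hε.2 hεg.2⟩).1.continuousOn).mono hKsub)
    choose! Bf hBf using aux_vdm hεf.1 hfbdd hfe
    choose! Bg hBg using aux_vdm hεg.1 hgbdd hge
    set B : ℝ := ∑ i ∈ Finset.range N, (|Bf i| + |Bg i|) with hB
    have hB0 : 0 ≤ B := Finset.sum_nonneg fun i _ => by positivity
    have hle : ∀ j < N, |Bf j| + |Bg j| ≤ B := fun j hj =>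
      Finset.single_le_sum (f := fun i => |Bf i| + |Bg i|) (fun i _ => by positivity)
        (Finset.mem_range.2 hj)
    have hBf' : ∀ j < N, ∀ z ∈ K, ‖fs j z‖ ≤ B := fun j hj z hz =>
      le_trans (hBf j hj z hz) (le_trans (le_abs_self _)
        (le_trans (le_add_of_nonneg_right (abs_nonneg _)) (hle j hj)))
    have hBg' : ∀ j < N, ∀ z ∈ K, ‖gs j z‖ ≤ B := fun j hj z hz =>
      le_trans (hBg j hj z hz) (le_trans (le_abs_self _)
        (le_trans (le_add_of_nonneg_left (abs_nonneg _)) (hle j hj)))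
    set C : ℝ := Cf*(N*B) + (Cf+N*B)*Cg + N^2*B^2 + N*B^2 + 1 with hC_def
    have hC : 0 < C := by positivity
    refine ⟨C, hC, min εf (min εg 1),
      ⟨⟨lt_min hεf.1 (lt_min hεg.1 one_pos), le_trans (min_le_left _ _) hεf.2⟩,
        le_trans (min_le_right _ _) (min_le_right _ _), ?_, ?_⟩⟩
    · -- bound on the coefficients hc
      intro m hm z hz
      calc ‖hc m z‖ ≤ ∑ i ∈ Finset.range (m+1), ‖fs i z * gs (m-i) z‖ := norm_sum_le _ _
        _ ≤ ∑ _i ∈ Finset.range (m+1), B*B := by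
            refine Finset.sum_le_sum fun i hi => ?_
            rw [norm_mul]
            have hi' : i < N := lt_of_lt_of_le (Finset.mem_range.1 hi) hm
            have hmi : m - i < N := lt_of_le_of_lt (Nat.sub_le _ _) hm
            exact mul_le_mul (hBf' i hi' z hz) (hBg' (m-i) hmi z hz) (norm_nonneg _) hB0
        _ = ((m:ℝ)+1) * (B*B) := by
            rw [Finset.sum_const, Finset.card_range, nsmul_eq_mul]; push_cast; ring
        _ ≤ C := by
            have h1 : (m:ℝ)+1 ≤ N := by exact_mod_cast hm
            have h2 : ((m:ℝ)+1) * (B*B) ≤ N * (B*B) := by nlinarith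
            have hn0 : (0:ℝ) ≤ N := Nat.cast_nonneg N
            rw [hC_def]; nlinarith [mul_nonneg (mul_nonneg hCf.le hn0) hB0,
              mul_nonneg (mul_nonneg hn0 hn0) (mul_nonneg hB0 hB0),
              mul_nonneg (add_nonneg hCf.le (mul_nonneg hn0 hB0)) hCg.le]
    · intro ε hε z hz
      have hε1 : ε ≤ 1 := le_trans hε.2 (le_trans (min_le_right _ _) (min_le_right _ _))
      have hεf' : ε ∈ Set.Ioc (0:ℝ) εf := ⟨hε.1, le_trans hε.2 (min_le_left _ _)⟩
      have hεg' : ε ∈ Set.Ioc (0:ℝ) εg :=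
        ⟨hε.1, le_trans hε.2 (le_trans (min_le_right _ _) (min_le_left _ _))⟩
      have hε₀' : ε ∈ Set.Ioc (0:ℝ) ε₀ := ⟨hε.1, le_trans hεf'.2 hεf.2⟩
      have hnε : ‖(ε:ℂ)‖ = ε := by
        rw [Complex.norm_real, Real.norm_of_nonneg hε.1.le]
      have hεN1 : ε ^ N ≤ 1 := pow_le_one₀ hε.1.le hε1
      have hεNpos : 0 < ε ^ N := pow_pos hε.1 N
      set F : ℂ := ∑ j ∈ Finset.range N, (ε:ℂ)^j * fs j z with hF_def
      set G : ℂ := ∑ j ∈ Finset.range N, (ε:ℂ)^j * gs j z with hG_def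
      have hterm : ∀ (cs : ℕ → ℂ → ℂ), (∀ j < N, ∀ z ∈ K, ‖cs j z‖ ≤ B) →
          ‖∑ j ∈ Finset.range N, (ε:ℂ)^j * cs j z‖ ≤ N * B := by
        intro cs hcs
        calc ‖∑ j ∈ Finset.range N, (ε:ℂ)^j * cs j z‖
            ≤ ∑ j ∈ Finset.range N, ‖(ε:ℂ)^j * cs j z‖ := norm_sum_le _ _
          _ ≤ ∑ _j ∈ Finset.range N, B := by
              refine Finset.sum_le_sum fun j hj => ?_
              rw [norm_mul, norm_pow, hnε]
              have h1 : ε^j ≤ 1 := pow_le_one₀ hε.1.le hε1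
              have h2 := hcs j (Finset.mem_range.1 hj) z hz
              nlinarith [norm_nonneg (cs j z), pow_pos hε.1 j]
          _ = N * B := by rw [Finset.sum_const, Finset.card_range, nsmul_eq_mul]
      have hFb : ‖F‖ ≤ N * B := hterm fs hBf'
      have hGb : ‖G‖ ≤ N * B := hterm gs hBg'
      have hfe' := hfe ε hεf' z hz
      have hge' := hge ε hεg' z hz
      have hfb : ‖f z ε‖ ≤ Cf + N * B := by
        have : ‖f z ε‖ ≤ ‖f z ε - F‖ + ‖F‖ := by
          calc ‖f z ε‖ = ‖(f z ε - F) + F‖ := by ring_nf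
            _ ≤ ‖f z ε - F‖ + ‖F‖ := norm_add_le _ _
        have h2 : Cf * ε^N ≤ Cf := by nlinarith
        exact le_trans this (by linarith [hfe'])
      -- decomposition
      have hdecomp : h z ε - ∑ m ∈ Finset.range N, (ε:ℂ)^m * hc m z
          = (f z ε - F)*G + f z ε * (g z ε - G)
            + (F*G - ∑ m ∈ Finset.range N, (ε:ℂ)^m * hc m z) := by
        rw [hh_eq ε hε₀' z (hKsub hz)]; ring
      -- the tail term
      have hFG : F*G - ∑ m ∈ Finset.range N, (ε:ℂ)^m * hc m z
          = ∑ p ∈ (Finset.range N ×ˢ Finset.range N).filter (fun p => ¬(p.1+p.2 < N)),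
              (ε:ℂ)^(p.1+p.2) * (fs p.1 z * gs p.2 z) := by
        have h1 : F*G = ∑ p ∈ Finset.range N ×ˢ Finset.range N,
            (ε:ℂ)^(p.1+p.2) * (fs p.1 z * gs p.2 z) := by
          rw [hF_def, hG_def, Finset.sum_mul_sum, Finset.sum_product]
          refine Finset.sum_congr rfl fun j _ => Finset.sum_congr rfl fun k _ => ?_
          rw [pow_add]; ring
        have h2 : ∑ m ∈ Finset.range N, (ε:ℂ)^m * hc m z
            = ∑ p ∈ (Finset.range N ×ˢ Finset.range N).filter (fun p => p.1+p.2 < N),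
                (ε:ℂ)^(p.1+p.2) * (fs p.1 z * gs p.2 z) := by
          rw [← aux_sum_cauchy (fun i k => fs i z * gs k z) N (ε:ℂ)]
          exact Finset.sum_congr rfl fun m _ => by rw [hc_def, Finset.mul_sum]
        have h3 := Finset.sum_filter_add_sum_filter_not
          (Finset.range N ×ˢ Finset.range N) (fun p => p.1+p.2 < N)
          (fun p => (ε:ℂ)^(p.1+p.2) * (fs p.1 z * gs p.2 z))
        rw [h1, h2, ← h3]; ring
      have htail : ‖F*G - ∑ m ∈ Finset.range N, (ε:ℂ)^m * hc m z‖
          ≤ (N^2*B^2) * ε^N := by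
        rw [hFG]
        have hbound : ∀ p ∈ (Finset.range N ×ˢ Finset.range N).filter
            (fun p => ¬(p.1+p.2 < N)),
            ‖(ε:ℂ)^(p.1+p.2) * (fs p.1 z * gs p.2 z)‖ ≤ ε^N * B^2 := by
          rintro ⟨a, b⟩ hp
          simp only [Finset.mem_filter, Finset.mem_product, Finset.mem_range, not_lt] at hp
          rw [norm_mul, norm_pow, hnε, norm_mul]
          have h1 : ε^(a+b) ≤ ε^N := pow_le_pow_of_le_one hε.1.le hε1 hp.2
          have h2 := hBf' a hp.1.1 z hz
          have h3 := hBg' b hp.1.2 z hz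
          have h4 : ‖fs a z‖ * ‖gs b z‖ ≤ B^2 := by nlinarith [norm_nonneg (fs a z), norm_nonneg (gs b z)]
          nlinarith [pow_nonneg hε.1.le (a+b), norm_nonneg (fs a z), norm_nonneg (gs b z),
            mul_nonneg (norm_nonneg (fs a z)) (norm_nonneg (gs b z))]
        calc ‖∑ p ∈ (Finset.range N ×ˢ Finset.range N).filter (fun p => ¬(p.1+p.2 < N)),
              (ε:ℂ)^(p.1+p.2) * (fs p.1 z * gs p.2 z)‖
            ≤ ∑ p ∈ (Finset.range N ×ˢ Finset.range N).filter (fun p => ¬(p.1+p.2 < N)),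
              ‖(ε:ℂ)^(p.1+p.2) * (fs p.1 z * gs p.2 z)‖ := norm_sum_le _ _
          _ ≤ ((Finset.range N ×ˢ Finset.range N).filter (fun p => ¬(p.1+p.2 < N))).card
              • (ε^N * B^2) := Finset.sum_le_card_nsmul _ _ _ hbound
          _ ≤ (N^2*B^2) * ε^N := by
              rw [nsmul_eq_mul]
              have hcard : (((Finset.range N ×ˢ Finset.range N).filter
                  (fun p => ¬(p.1+p.2 < N))).card : ℝ) ≤ (N:ℝ)^2 := by
                have := Finset.card_filter_le (Finset.range N ×ˢ Finset.range N)
                  (fun p => ¬(p.1+p.2 < N))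
                rw [Finset.card_product, Finset.card_range] at this
                have : (((Finset.range N ×ˢ Finset.range N).filter
                    (fun p => ¬(p.1+p.2 < N))).card : ℝ) ≤ (N:ℝ)*N := by exact_mod_cast this
                nlinarith
              nlinarith [mul_nonneg hεNpos.le (mul_nonneg hB0 hB0),
                Finset.card_filter_le (Finset.range N ×ˢ Finset.range N) (fun p => ¬(p.1+p.2 < N)),
                mul_nonneg hB0 hB0]
      -- put everything together
      rw [hdecomp]
      have hN0 : (0:ℝ) ≤ N := Nat.cast_nonneg N
      have hNB : (0:ℝ) ≤ N*B := mul_nonneg hN0 hB0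
      calc ‖(f z ε - F)*G + f z ε * (g z ε - G)
            + (F*G - ∑ m ∈ Finset.range N, (ε:ℂ)^m * hc m z)‖
          ≤ ‖(f z ε - F)*G‖ + ‖f z ε * (g z ε - G)‖
            + ‖F*G - ∑ m ∈ Finset.range N, (ε:ℂ)^m * hc m z‖ :=
            norm_add₃_le
        _ ≤ (Cf*ε^N)*(N*B) + (Cf+N*B)*(Cg*ε^N) + (N^2*B^2)*ε^N := by
            rw [norm_mul, norm_mul]
            refine add_le_add (add_le_add ?_ ?_) htail
            · exact mul_le_mul hfe' hGb (norm_nonneg _) (by positivity)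
            · exact mul_le_mul hfb (hge ε hεg' z hz) (norm_nonneg _) (by positivity)
        _ ≤ C * ε^N := by rw [hC_def]; nlinarith [mul_nonneg hNB hεNpos.le]
  -- main induction on the order of the expansion
  have main : ∀ m, m ≤ N → ∃ H : ℕ → ℂ → ℂ,
      (∀ j < m, DifferentiableOn ℂ (H j) E) ∧
      (∀ j < m, ∀ z ∈ E \ S₀, H j z = hc j z) ∧
      (∀ K : Set ℂ, K ⊆ E → IsCompact K → ∃ C > 0, ∃ εK ∈ Set.Ioc (0:ℝ) ε₀,
        ∀ ε ∈ Set.Ioc (0:ℝ) εK, ∀ z ∈ K,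
          ‖h z ε - ∑ j ∈ Finset.range m, (ε:ℂ)^j * H j z‖ ≤ C * ε ^ m) := by
    intro m
    induction m with
    | zero =>
      intro _
      refine ⟨fun _ _ => 0, fun j hj => absurd hj (Nat.not_lt_zero j),
        fun j hj => absurd hj (Nat.not_lt_zero j), ?_⟩
      intro K hKE hK
      obtain ⟨K'', hK''c, hK''sub, hmax⟩ := aux_max hEopen hS₀E hS₀ hKE hK
      obtain ⟨C, hC, εK, hεK, hεK1, hcb, hhb⟩ := stepB K'' hK''sub hK''c
      refine ⟨C*(1+N), by positivity, εK, hεK, ?_⟩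
      intro ε hε z hz
      simp only [Finset.range_zero, Finset.sum_empty, sub_zero, pow_zero, mul_one]
      refine hmax (fun w => h w ε) (hh_holo ε ⟨hε.1, le_trans hε.2 hεK.2⟩) _ ?_ z hz
      intro w hw
      have hε1 : ε ≤ 1 := le_trans hε.2 hεK1
      have hnε : ‖(ε:ℂ)‖ = ε := by rw [Complex.norm_real, Real.norm_of_nonneg hε.1.le]
      have h1 := hhb ε hε w hw
      have h2 : ‖∑ j ∈ Finset.range N, (ε:ℂ)^j * hc j w‖ ≤ N * C := by
        calc ‖∑ j ∈ Finset.range N, (ε:ℂ)^j * hc j w‖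
            ≤ ∑ j ∈ Finset.range N, ‖(ε:ℂ)^j * hc j w‖ := norm_sum_le _ _
          _ ≤ ∑ _j ∈ Finset.range N, C := by
              refine Finset.sum_le_sum fun j hj => ?_
              rw [norm_mul, norm_pow, hnε]
              have hεj : ε^j ≤ 1 := pow_le_one₀ hε.1.le hε1
              have := hcb j (Finset.mem_range.1 hj) w hw
              nlinarith [norm_nonneg (hc j w), pow_pos hε.1 j]
          _ = N * C := by rw [Finset.sum_const, Finset.card_range, nsmul_eq_mul]
      have h3 : ‖h w ε‖ ≤ ‖h w ε - ∑ j ∈ Finset.range N, (ε:ℂ)^j * hc j w‖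
          + ‖∑ j ∈ Finset.range N, (ε:ℂ)^j * hc j w‖ := by
        calc ‖h w ε‖ = ‖(h w ε - ∑ j ∈ Finset.range N, (ε:ℂ)^j * hc j w)
              + ∑ j ∈ Finset.range N, (ε:ℂ)^j * hc j w‖ := by rw [sub_add_cancel]
          _ ≤ _ := norm_add_le _ _
      have h4 : C * ε^N ≤ C := by nlinarith [pow_le_one₀ hε.1.le hε1 (n := N), pow_pos hε.1 N]
      nlinarith
    | succ m ih =>
      intro hm1
      have hmN : m < N := hm1
      obtain ⟨H, hHdiff, hHeq, hHexp⟩ := ih (le_of_lt hmN)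
      set ψ : ℂ → ℝ → ℂ :=
        fun z ε => ((ε:ℂ)^m)⁻¹ * (h z ε - ∑ j ∈ Finset.range m, (ε:ℂ)^j * H j z) with hψ_def
      have hψdiff : ∀ ε ∈ Set.Ioc (0:ℝ) ε₀, DifferentiableOn ℂ (fun z => ψ z ε) E := by
        intro ε hε
        exact ((hh_holo ε hε).sub (DifferentiableOn.fun_sum fun j hj =>
          (hHdiff j (Finset.mem_range.1 hj)).const_mul _)).const_mul _
      -- key estimate on compacts of E \ S₀
      have key : ∀ K : Set ℂ, K ⊆ E \ S₀ → IsCompact K → ∃ C > 0, ∃ εK ∈ Set.Ioc (0:ℝ) ε₀,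
          ∀ ε ∈ Set.Ioc (0:ℝ) εK, ∀ z ∈ K, ‖ψ z ε - hc m z‖ ≤ C * ε := by
        intro K hKsub hK
        obtain ⟨C, hC, εK, hεK, hεK1, hcb, hhb⟩ := stepB K hKsub hK
        refine ⟨C*(1+N), by positivity, εK, hεK, ?_⟩
        intro ε hε z hz
        have hεpos := hε.1
        have hε1 : ε ≤ 1 := le_trans hε.2 hεK1
        have hnε : ‖(ε:ℂ)‖ = ε := by rw [Complex.norm_real, Real.norm_of_nonneg hεpos.le]
        have hεne : (ε:ℂ)^m ≠ 0 := pow_ne_zero m (by exact_mod_cast hεpos.ne')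
        -- identity
        have hHsub : ∑ j ∈ Finset.range m, (ε:ℂ)^j * H j z
            = ∑ j ∈ Finset.range m, (ε:ℂ)^j * hc j z :=
          Finset.sum_congr rfl fun j hj => by
            rw [hHeq j (Finset.mem_range.1 hj) z (hKsub hz)]
        have hsplit : ∑ j ∈ Finset.range N, (ε:ℂ)^j * hc j z
            = ∑ j ∈ Finset.range m, (ε:ℂ)^j * hc j z + (ε:ℂ)^m * hc m z
              + ∑ j ∈ Finset.Ico (m+1) N, (ε:ℂ)^j * hc j z := by
          rw [Finset.range_eq_Ico,
            ← Finset.sum_Ico_consecutive (fun j => (ε:ℂ)^j * hc j z)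
              (Nat.zero_le m) (le_of_lt hmN),
            Finset.sum_eq_sum_Ico_succ_bot hmN (fun j => (ε:ℂ)^j * hc j z),
            ← Finset.range_eq_Ico]
          ring
        have hid : (ε:ℂ)^m * (ψ z ε - hc m z)
            = (h z ε - ∑ j ∈ Finset.range N, (ε:ℂ)^j * hc j z)
              + ∑ j ∈ Finset.Ico (m+1) N, (ε:ℂ)^j * hc j z := by
          rw [hψ_def]
          simp only []
          rw [hHsub, hsplit]
          field_simp
          ring
        -- norms
        have htail2 : ‖∑ j ∈ Finset.Ico (m+1) N, (ε:ℂ)^j * hc j z‖ ≤ N * C * ε^(m+1) := by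
          calc ‖∑ j ∈ Finset.Ico (m+1) N, (ε:ℂ)^j * hc j z‖
              ≤ ∑ j ∈ Finset.Ico (m+1) N, ‖(ε:ℂ)^j * hc j z‖ := norm_sum_le _ _
            _ ≤ ∑ _j ∈ Finset.Ico (m+1) N, ε^(m+1) * C := by
                refine Finset.sum_le_sum fun j hj => ?_
                obtain ⟨hj1, hj2⟩ := Finset.mem_Ico.1 hj
                rw [norm_mul, norm_pow, hnε]
                have h1 : ε^j ≤ ε^(m+1) := pow_le_pow_of_le_one hεpos.le hε1 hj1
                have h2 := hcb j hj2 z hz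
                nlinarith [norm_nonneg (hc j z), pow_pos hεpos j, pow_pos hεpos (m+1)]
            _ ≤ N * C * ε^(m+1) := by
                rw [Finset.sum_const, nsmul_eq_mul]
                have hcard : ((Finset.Ico (m+1) N).card : ℝ) ≤ N := by
                  rw [Nat.card_Ico]; exact_mod_cast Nat.sub_le N (m+1)
                nlinarith [pow_pos hεpos (m+1), mul_pos (pow_pos hεpos (m+1)) hC]
        have hεm : 0 < ε^m := pow_pos hεpos m
        have hnorm : ε^m * ‖ψ z ε - hc m z‖ ≤ (C*(1+N)*ε) * ε^m := by
          have h1 : ‖(ε:ℂ)^m * (ψ z ε - hc m z)‖ = ε^m * ‖ψ z ε - hc m z‖ := by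
            rw [norm_mul, norm_pow, hnε]
          have h2 : ‖(h z ε - ∑ j ∈ Finset.range N, (ε:ℂ)^j * hc j z)
              + ∑ j ∈ Finset.Ico (m+1) N, (ε:ℂ)^j * hc j z‖
              ≤ C * ε^N + N * C * ε^(m+1) := le_trans (norm_add_le _ _)
                (add_le_add (hhb ε hε z hz) htail2)
          have h3 : C * ε^N ≤ C * ε^(m+1) :=
            mul_le_mul_of_nonneg_left
              (pow_le_pow_of_le_one hεpos.le hε1 (Nat.succ_le_of_lt hmN)) hC.le
          have h4 : ε^(m+1) = ε * ε^m := by rw [pow_succ]; ring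
          have h5 : ε^m * ‖ψ z ε - hc m z‖ ≤ C * ε^N + N * C * ε^(m+1) := by
            rw [← h1, hid]; exact h2
          calc ε^m * ‖ψ z ε - hc m z‖ ≤ C * ε^N + N * C * ε^(m+1) := h5
            _ ≤ C * ε^(m+1) + N * C * ε^(m+1) := by linarith
            _ = (C*(1+N)*ε) * ε^m := by rw [pow_succ]; ring
        exact le_of_mul_le_mul_right
          (by linarith [hnorm, mul_comm (ε^m) (‖ψ z ε - hc m z‖)]) hεm
      -- Cauchy-type estimate on compacts of E, via the maximum principle
      have cauchy : ∀ K : Set ℂ, K ⊆ E → IsCompact K → ∃ C > 0, ∃ εK ∈ Set.Ioc (0:ℝ) ε₀,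
          ∀ ε ∈ Set.Ioc (0:ℝ) εK, ∀ ε' ∈ Set.Ioc (0:ℝ) εK, ∀ z ∈ K,
            ‖ψ z ε - ψ z ε'‖ ≤ C * (ε + ε') := by
        intro K hKE hK
        obtain ⟨K'', hK''c, hK''sub, hmax⟩ := aux_max hEopen hS₀E hS₀ hKE hK
        obtain ⟨C, hC, εK, hεK, hkey⟩ := key K'' hK''sub hK''c
        refine ⟨C, hC, εK, hεK, ?_⟩
        intro ε hε ε' hε' z hz
        have hεIoc : ε ∈ Set.Ioc (0:ℝ) ε₀ := ⟨hε.1, le_trans hε.2 hεK.2⟩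
        have hε'Ioc : ε' ∈ Set.Ioc (0:ℝ) ε₀ := ⟨hε'.1, le_trans hε'.2 hεK.2⟩
        refine hmax (fun w => ψ w ε - ψ w ε')
          ((hψdiff ε hεIoc).sub (hψdiff ε' hε'Ioc)) _ ?_ z hz
        intro w hw
        calc ‖ψ w ε - ψ w ε'‖
            = ‖(ψ w ε - hc m w) - (ψ w ε' - hc m w)‖ := by rw [sub_sub_sub_cancel_right]
          _ ≤ ‖ψ w ε - hc m w‖ + ‖ψ w ε' - hc m w‖ := norm_sub_le _ _
          _ ≤ C * ε + C * ε' := add_le_add (hkey ε hε w hw) (hkey ε' hε' w hw)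
          _ = C * (ε + ε') := by ring
      -- existence of the limit as ε → 0⁺
      have hlim : ∀ z ∈ E, ∃ a : ℂ, Tendsto (fun ε => ψ z ε) (𝓝[>] (0:ℝ)) (𝓝 a) := by
        intro z hzE
        obtain ⟨C, hC, εz, hεz, hcz⟩ :=
          cauchy {z} (Set.singleton_subset_iff.2 hzE) isCompact_singleton
        set u : ℕ → ℝ := fun n => εz / (n+1) with hu_def
        have humem : ∀ n, u n ∈ Set.Ioc (0:ℝ) εz := by
          intro n
          constructor
          · exact div_pos hεz.1 (by positivity)
          · rw [div_le_iff₀ (by positivity)]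
            nlinarith [hεz.1.le, mul_nonneg hεz.1.le (Nat.cast_nonneg (α := ℝ) n)]
        have hu0 : Tendsto u atTop (𝓝 0) := by
          have h1 : Tendsto (fun n : ℕ => 1/((n:ℝ)+1)) atTop (𝓝 0) :=
            tendsto_one_div_add_atTop_nhds_zero_nat
          have := h1.const_mul εz
          simpa [hu_def, div_eq_mul_inv, mul_comm, one_div, mul_zero] using this
        have hmono : ∀ n k : ℕ, n ≤ k → u k ≤ u n := by
          intro n k hnk
          have hcast : ((n:ℝ))+1 ≤ ((k:ℝ))+1 := by
            have : (n:ℝ) ≤ (k:ℝ) := Nat.cast_le.2 hnk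
            linarith
          exact div_le_div_of_nonneg_left hεz.1.le (by positivity) hcast
        have hcs : CauchySeq (fun n => ψ z (u n)) := by
          apply cauchySeq_of_le_tendsto_0 (fun n => C * (2 * u n))
          · intro n k L hLn hLk
            rw [dist_eq_norm]
            refine le_trans (hcz (u n) (humem n) (u k) (humem k) z rfl) ?_
            have h1 := hmono L n hLn
            have h2 := hmono L k hLk
            nlinarith
          · have := hu0.const_mul (2*C)
            rw [mul_zero] at this
            exact this.congr (fun n => by ring)
        obtain ⟨a, ha⟩ := cauchySeq_tendsto_of_complete hcs
        refine ⟨a, ?_⟩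
        have hb : ∀ ε ∈ Set.Ioc (0:ℝ) εz, ‖ψ z ε - a‖ ≤ C * ε := by
          intro ε hε
          have h1 : Tendsto (fun n => ‖ψ z ε - ψ z (u n)‖) atTop (𝓝 ‖ψ z ε - a‖) :=
            (tendsto_const_nhds.sub ha).norm
          have h2 : Tendsto (fun n => C * (ε + u n)) atTop (𝓝 (C * (ε + 0))) :=
            tendsto_const_nhds.mul (tendsto_const_nhds.add hu0)
          rw [add_zero] at h2
          exact le_of_tendsto_of_tendsto h1 h2
            (Filter.Eventually.of_forall fun n => hcz ε hε (u n) (humem n) z rfl)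
        rw [← tendsto_sub_nhds_zero_iff]
        refine squeeze_zero_norm' (a := fun ε : ℝ => C * ε) ?_ ?_
        · filter_upwards [Ioc_mem_nhdsGT_of_mem ⟨le_refl (0:ℝ), hεz.1⟩] with ε hε
          exact hb ε hε
        · have h3 : Tendsto (fun ε : ℝ => C * ε) (𝓝 0) (𝓝 (C * 0)) :=
            (continuous_const.mul continuous_id).tendsto 0
          rw [mul_zero] at h3
          exact h3.mono_left nhdsWithin_le_nhds
      set H' : ℂ → ℂ := fun z => limUnder (𝓝[>] (0:ℝ)) (fun ε => ψ z ε) with hH'_def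
      have htend : ∀ z ∈ E, Tendsto (fun ε => ψ z ε) (𝓝[>] (0:ℝ)) (𝓝 (H' z)) := by
        intro z hz
        obtain ⟨a, ha⟩ := hlim z hz
        have : H' z = a := ha.limUnder_eq
        rwa [this]
      -- uniform bound on compacts of E
      have hunif : ∀ K : Set ℂ, K ⊆ E → IsCompact K → ∃ C > 0, ∃ εK ∈ Set.Ioc (0:ℝ) ε₀,
          ∀ ε ∈ Set.Ioc (0:ℝ) εK, ∀ z ∈ K, ‖ψ z ε - H' z‖ ≤ C * ε := by
        intro K hKE hK
        obtain ⟨C, hC, εK, hεK, hcz⟩ := cauchy K hKE hK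
        refine ⟨C, hC, εK, hεK, ?_⟩
        intro ε hε z hz
        have h1 : Tendsto (fun ε' => ‖ψ z ε - ψ z ε'‖) (𝓝[>] (0:ℝ)) (𝓝 ‖ψ z ε - H' z‖) :=
          (tendsto_const_nhds.sub (htend z (hKE hz))).norm
        have h2 : Tendsto (fun ε' : ℝ => C * (ε + ε')) (𝓝[>] (0:ℝ)) (𝓝 (C * (ε + 0))) := by
          refine Filter.Tendsto.mono_left ?_ nhdsWithin_le_nhds
          exact (continuous_const.mul (continuous_const.add continuous_id)).tendsto 0
        rw [add_zero] at h2
        refine le_of_tendsto_of_tendsto h1 h2 ?_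
        filter_upwards [Ioc_mem_nhdsGT_of_mem ⟨le_refl (0:ℝ), hεK.1⟩] with ε' hε'
        exact hcz ε hε ε' hε' z hz
      -- H' is holomorphic on E
      have hH'diff : DifferentiableOn ℂ H' E := by
        refine TendstoLocallyUniformlyOn.differentiableOn
          (F := fun (ε : ℝ) (w : ℂ) => ψ w ε) (φ := 𝓝[>] (0:ℝ)) ?_ ?_ hEopen
        · rw [tendstoLocallyUniformlyOn_iff_forall_isCompact hEopen]
          intro K hKE hK
          rw [Metric.tendstoUniformlyOn_iff]
          intro η hη
          obtain ⟨C, hC, εK, hεK, hb⟩ := hunif K hKE hK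
          have hmem : Set.Ioc (0:ℝ) (min εK (η/(2*C))) ∈ 𝓝[>] (0:ℝ) :=
            Ioc_mem_nhdsGT_of_mem ⟨le_refl _, lt_min hεK.1 (by positivity)⟩
          filter_upwards [hmem] with ε hε
          intro z hz
          rw [dist_comm, dist_eq_norm]
          have h1 := hb ε ⟨hε.1, le_trans hε.2 (min_le_left _ _)⟩ z hz
          have h2 : ε ≤ η/(2*C) := le_trans hε.2 (min_le_right _ _)
          have h3 : C * ε ≤ C * (η/(2*C)) := by nlinarith
          have h4 : C * (η/(2*C)) = η/2 := by field_simp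
          calc ‖ψ z ε - H' z‖ ≤ C * ε := h1
            _ ≤ η/2 := by rw [← h4]; exact h3
            _ < η := by linarith
        · filter_upwards [Ioc_mem_nhdsGT_of_mem ⟨le_refl (0:ℝ), hε₀⟩] with ε hε
          exact hψdiff ε hε
      -- H' agrees with hc m on E \ S₀
      have hH'eq : ∀ z ∈ E \ S₀, H' z = hc m z := by
        intro z hz
        obtain ⟨C, hC, εz, hεz, hcz⟩ :=
          key {z} (Set.singleton_subset_iff.2 hz) isCompact_singleton
        have h1 : Tendsto (fun ε => ψ z ε) (𝓝[>] (0:ℝ)) (𝓝 (hc m z)) := by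
          rw [← tendsto_sub_nhds_zero_iff]
          refine squeeze_zero_norm' (a := fun ε : ℝ => C * ε) ?_ ?_
          · filter_upwards [Ioc_mem_nhdsGT_of_mem ⟨le_refl (0:ℝ), hεz.1⟩] with ε hε
            exact hcz ε hε z rfl
          · have h3 : Tendsto (fun ε : ℝ => C * ε) (𝓝 0) (𝓝 (C * 0)) :=
              (continuous_const.mul continuous_id).tendsto 0
            rw [mul_zero] at h3
            exact h3.mono_left nhdsWithin_le_nhds
        exact tendsto_nhds_unique (htend z hz.1) h1
      -- conclude
      refine ⟨fun j => if j = m then H' else H j, ?_, ?_, ?_⟩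
      · intro j hj
        by_cases hjm : j = m
        · simpa [hjm] using hH'diff
        · have hjm' : j < m := lt_of_le_of_ne (Nat.lt_succ_iff.1 hj) hjm
          simpa [hjm] using hHdiff j hjm'
      · intro j hj z hz
        by_cases hjm : j = m
        · subst hjm; simpa using hH'eq z hz
        · have hjm' : j < m := lt_of_le_of_ne (Nat.lt_succ_iff.1 hj) hjm
          simpa [hjm] using hHeq j hjm' z hz
      · intro K hKE hK
        obtain ⟨C, hC, εK, hεK, hb⟩ := hunif K hKE hK
        refine ⟨C, hC, εK, hεK, ?_⟩
        intro ε hε z hz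
        have hεpos := hε.1
        have hnε : ‖(ε:ℂ)‖ = ε := by rw [Complex.norm_real, Real.norm_of_nonneg hεpos.le]
        have hεne : (ε:ℂ)^m ≠ 0 := pow_ne_zero m (by exact_mod_cast hεpos.ne')
        have hsum : ∑ j ∈ Finset.range (m+1), (ε:ℂ)^j * (if j = m then H' else H j) z
            = ∑ j ∈ Finset.range m, (ε:ℂ)^j * H j z + (ε:ℂ)^m * H' z := by
          rw [Finset.sum_range_succ]
          congr 1
          · refine Finset.sum_congr rfl fun j hj => ?_
            have : j ≠ m := Nat.ne_of_lt (Finset.mem_range.1 hj)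
            simp [this]
          · simp
        have hid : h z ε - ∑ j ∈ Finset.range (m+1), (ε:ℂ)^j * (if j = m then H' else H j) z
            = (ε:ℂ)^m * (ψ z ε - H' z) := by
          rw [hsum, hψ_def]
          simp only []
          field_simp
          ring
        rw [hid, norm_mul, norm_pow, hnε]
        have h1 := hb ε hε z hz
        have h2 : ε^(m+1) = ε^m * ε := pow_succ ε m
        nlinarith [pow_pos hεpos m, norm_nonneg (ψ z ε - H' z)]
  obtain ⟨H, h1, _, h3⟩ := main N le_rfl
  exact ⟨H, h1, h3⟩
end

section
/- Let d ≥ 1 be an integer and R ≥ 1. There exist constants C > 0 and ε₀ ∈ (0, 1) such that for all ε ∈ (0, ε₀), all k ∈ ℤ^d with k ≠ 0, all ξ ∈ ℝ^d with |ξ| ≤ R and all λ ∈ ℂ with |λ| ≤ R, one has |ξ + k/ε|² − λ² ≠ 0 and |1/(|ξ + k/ε|² − λ²) − ε²/|k|² + 2ε³·⟨k, ξ⟩/|k|⁴ + ε⁴·(|ξ|² − λ²)/|k|⁴ − 4ε⁴·⟨k, ξ⟩²/|k|⁶| ≤ C·ε⁵. -/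
/-- Key algebraic identity in ℂ. -/
lemma resolvent_aux_identity (e K Pc μ : ℂ) (he : e ≠ 0) (hK : K ≠ 0)
    (hW : K + (2 * e * Pc + e ^ 2 * μ) ≠ 0) :
    (e⁻¹ ^ 2 * K * (1 + (2 * e * Pc / K + e ^ 2 * μ / K)))⁻¹
      - e ^ 2 / K + 2 * e ^ 3 * Pc / K ^ 2 + e ^ 4 / K ^ 2 * μ - 4 * e ^ 4 * Pc ^ 2 / K ^ 3
    = e ^ 2 * (K * (e ^ 2 * μ) * ((2 * e * Pc + e ^ 2 * μ) + 2 * e * Pc)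
        - (2 * e * Pc) ^ 2 * (2 * e * Pc + e ^ 2 * μ))
      / (K ^ 3 * (K + (2 * e * Pc + e ^ 2 * μ))) := by
  have h1 : e⁻¹ ^ 2 * K * (1 + (2 * e * Pc / K + e ^ 2 * μ / K))
      = (K + (2 * e * Pc + e ^ 2 * μ)) / e ^ 2 := by
    field_simp
  rw [h1, inv_div]
  set W : ℂ := K + (2 * e * Pc + e ^ 2 * μ) with hWdef
  clear_value W
  field_simp [hK, hW]
  rw [hWdef]
  ring

set_option maxHeartbeats 1000000 in
/-- uniform expansion of `1/(|ξ + k/ε|² - λ²)` in powers of `ε`,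
for `k ∈ ℤ^d \ {0}`, `|ξ| ≤ R` and `|λ| ≤ R`. -/
theorem resolvent_symbol_expansion (d : ℕ) (hd : 1 ≤ d) (R : ℝ) (hR : 1 ≤ R) :
    ∃ C > 0, ∃ ε₀ ∈ Set.Ioo (0 : ℝ) 1, ∀ ε ∈ Set.Ioo (0 : ℝ) ε₀,
      ∀ k : Fin d → ℤ, k ≠ 0 →
      let kE : EuclideanSpace ℝ (Fin d) := WithLp.toLp 2 (fun i => (k i : ℝ))
      ∀ ξ : EuclideanSpace ℝ (Fin d), ‖ξ‖ ≤ R →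
      ∀ lam : ℂ, ‖lam‖ ≤ R →
      ((‖ξ + ε⁻¹ • kE‖ ^ 2 : ℝ) : ℂ) - lam ^ 2 ≠ 0 ∧
      ‖((((‖ξ + ε⁻¹ • kE‖ ^ 2 : ℝ) : ℂ) - lam ^ 2)⁻¹
          - ((ε ^ 2 / ‖kE‖ ^ 2 : ℝ) : ℂ)
          + ((2 * ε ^ 3 * (inner ℝ kE ξ : ℝ) / ‖kE‖ ^ 4 : ℝ) : ℂ)
          + ((ε ^ 4 / ‖kE‖ ^ 4 : ℝ) : ℂ) * (((‖ξ‖ ^ 2 : ℝ) : ℂ) - lam ^ 2)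
          - ((4 * ε ^ 4 * (inner ℝ kE ξ : ℝ) ^ 2 / ‖kE‖ ^ 6 : ℝ) : ℂ))‖
        ≤ C * ε ^ 5 := by
  have hR0 : (0:ℝ) < R := lt_of_lt_of_le one_pos hR
  refine ⟨56 * R ^ 4, by positivity, 1 / (8 * R ^ 2), ⟨by positivity, ?_⟩, ?_⟩
  · rw [div_lt_one (by positivity)]; nlinarith
  intro ε hε k hk kE ξ hξ lam hlam
  obtain ⟨hε0, hεup⟩ := hε
  have hεR : ε * (8 * R ^ 2) < 1 := by
    rw [← lt_div_iff₀ (by positivity)]; simpa [div_eq_mul_inv] using hεup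
  have hε1 : ε < 1 := by nlinarith
  -- the integer vector has norm at least 1
  have hnk1 : (1:ℝ) ≤ ‖kE‖ := by
    obtain ⟨i, hi⟩ := Function.ne_iff.mp hk
    simp only [Pi.zero_apply] at hi
    have h1 : (1:ℝ) ≤ |(k i : ℝ)| := by
      have := Int.one_le_abs hi
      exact_mod_cast this
    have h2 : (1:ℝ) ≤ ∑ j, ‖kE j‖ ^ 2 := by
      refine le_trans ?_ (Finset.single_le_sum (f := fun j => ‖kE j‖ ^ 2)
        (fun j _ => sq_nonneg _) (Finset.mem_univ i))
      show (1:ℝ) ≤ ‖kE i‖ ^ 2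
      have hkEi : ‖kE i‖ = |(k i : ℝ)| := by simp [kE, Real.norm_eq_abs]
      rw [hkEi]
      nlinarith
    rw [EuclideanSpace.norm_eq]
    rw [show (1:ℝ) = Real.sqrt 1 by simp]
    exact Real.sqrt_le_sqrt h2
  have hnk0 : (0:ℝ) < ‖kE‖ := lt_of_lt_of_le one_pos hnk1
  have hnksq : (1:ℝ) ≤ ‖kE‖ ^ 2 := by nlinarith
  set P : ℝ := (inner ℝ kE ξ : ℝ) with hPdef
  -- expansion of the squared norm
  have hA : ‖ξ + ε⁻¹ • kE‖ ^ 2 = ‖ξ‖ ^ 2 + 2 * (ε⁻¹ * P) + ε⁻¹ ^ 2 * ‖kE‖ ^ 2 := by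
    rw [norm_add_sq_real, real_inner_smul_right, norm_smul, mul_pow]
    have hn : ‖ε⁻¹‖ = ε⁻¹ := by
      rw [Real.norm_eq_abs, abs_of_pos (inv_pos.mpr hε0)]
    rw [hn, real_inner_comm kE ξ, ← hPdef]
  -- complex abbreviations
  set ec : ℂ := (ε : ℂ) with hec
  set Kc : ℂ := ((‖kE‖ : ℝ) : ℂ) ^ 2 with hKc
  set Pc : ℂ := ((P : ℝ) : ℂ) with hPc
  set μ : ℂ := ((‖ξ‖ : ℝ) : ℂ) ^ 2 - lam ^ 2 with hμ
  set δ1 : ℂ := 2 * ec * Pc / Kc with hδ1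
  set δ2 : ℂ := ec ^ 2 * μ / Kc with hδ2
  have hecne : ec ≠ 0 := by
    simp only [hec, ne_eq, Complex.ofReal_eq_zero]
    exact hε0.ne'
  have hKcne : Kc ≠ 0 := by
    rw [hKc]
    exact pow_ne_zero _ (Complex.ofReal_ne_zero.mpr hnk0.ne')
  -- abs computations
  have habsec : ‖ec‖ = ε := by
    rw [hec, Complex.norm_real, Real.norm_eq_abs, abs_of_pos hε0]
  have habsKc : ‖Kc‖ = ‖kE‖ ^ 2 := by
    rw [hKc, norm_pow, Complex.norm_real, Real.norm_eq_abs, abs_of_pos hnk0]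
  have habsPc : ‖Pc‖ = |P| := by rw [hPc, Complex.norm_real, Real.norm_eq_abs]
  have hPb : |P| ≤ ‖kE‖ * R := by
    refine (abs_real_inner_le_norm kE ξ).trans ?_
    exact mul_le_mul_of_nonneg_left hξ (norm_nonneg _)
  have habsμ : ‖μ‖ ≤ 2 * R ^ 2 := by
    have h1 : ‖μ‖ ≤ ‖((‖ξ‖ : ℝ) : ℂ) ^ 2‖ + ‖lam ^ 2‖ := by
      rw [hμ]
      exact norm_sub_le _ _
    have h2 : ‖((‖ξ‖ : ℝ) : ℂ) ^ 2‖ ≤ R ^ 2 := by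
      rw [norm_pow, Complex.norm_real, Real.norm_eq_abs, abs_of_nonneg (norm_nonneg _)]
      exact pow_le_pow_left₀ (norm_nonneg _) hξ 2
    have h3 : ‖lam ^ 2‖ ≤ R ^ 2 := by
      rw [norm_pow]
      exact pow_le_pow_left₀ (norm_nonneg _) hlam 2
    linarith
  -- bounds for the W-terms
  have hW1 : ‖2 * ec * Pc‖ ≤ 2 * ε * R * ‖kE‖ := by
    rw [norm_mul, norm_mul, Complex.norm_two, habsec, habsPc]
    have := mul_le_mul_of_nonneg_left hPb (by positivity : (0:ℝ) ≤ 2 * ε)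
    linarith [this]
  have hW2 : ‖ec ^ 2 * μ‖ ≤ 2 * ε ^ 2 * R ^ 2 := by
    rw [norm_mul, norm_pow, habsec]
    calc ε ^ 2 * ‖μ‖ ≤ ε ^ 2 * (2 * R ^ 2) :=
          mul_le_mul_of_nonneg_left habsμ (by positivity)
      _ = 2 * ε ^ 2 * R ^ 2 := by ring
  have hWb : ‖2 * ec * Pc + ec ^ 2 * μ‖ ≤ 4 * ε * R ^ 2 * ‖kE‖ := by
    refine (norm_add_le _ _).trans ?_
    have e1 : 2 * ε * R * ‖kE‖ ≤ 2 * ε * R ^ 2 * ‖kE‖ := by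
      nlinarith [mul_nonneg (mul_nonneg (show (0:ℝ) ≤ 2 * ε by linarith)
        (show (0:ℝ) ≤ R ^ 2 - R by nlinarith)) hnk0.le]
    have e2 : 2 * ε ^ 2 * R ^ 2 ≤ 2 * ε * R ^ 2 * ‖kE‖ := by
      nlinarith [mul_nonneg (show (0:ℝ) ≤ 2 * ε * R ^ 2 by positivity)
        (show (0:ℝ) ≤ ‖kE‖ - ε by linarith)]
    linarith
  have hWW1 : ‖(2 * ec * Pc + ec ^ 2 * μ) + 2 * ec * Pc‖ ≤ 6 * ε * R ^ 2 * ‖kE‖ := by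
    refine (norm_add_le _ _).trans ?_
    have e1 : 2 * ε * R * ‖kE‖ ≤ 2 * ε * R ^ 2 * ‖kE‖ := by
      nlinarith [mul_nonneg (mul_nonneg (show (0:ℝ) ≤ 2 * ε by linarith)
        (show (0:ℝ) ≤ R ^ 2 - R by nlinarith)) hnk0.le]
    linarith
  -- the factored/shifted denominators
  have hδb : ‖δ1 + δ2‖ ≤ 1 / 2 := by
    have h1 : ‖δ1‖ ≤ 2 * ε * R := by
      rw [hδ1, norm_div, habsKc]
      rw [div_le_iff₀ (by positivity)]
      have := mul_le_mul_of_nonneg_left hnksq (by positivity : (0:ℝ) ≤ 2 * ε * R)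
      calc ‖2 * ec * Pc‖ ≤ 2 * ε * R * ‖kE‖ := hW1
        _ ≤ 2 * ε * R * ‖kE‖ ^ 2 := by
          nlinarith [mul_nonneg (mul_nonneg (show (0:ℝ) ≤ 2 * ε * R by positivity) hnk0.le)
            (show (0:ℝ) ≤ ‖kE‖ - 1 by linarith)]
    have h2 : ‖δ2‖ ≤ 2 * ε ^ 2 * R ^ 2 := by
      rw [hδ2, norm_div, habsKc]
      rw [div_le_iff₀ (by positivity)]
      calc ‖ec ^ 2 * μ‖ ≤ 2 * ε ^ 2 * R ^ 2 := hW2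
        _ ≤ 2 * ε ^ 2 * R ^ 2 * ‖kE‖ ^ 2 := by
          nlinarith [mul_nonneg (show (0:ℝ) ≤ 2 * ε ^ 2 * R ^ 2 by positivity)
            (show (0:ℝ) ≤ ‖kE‖ ^ 2 - 1 by linarith)]
    refine (norm_add_le δ1 δ2).trans ?_
    have ha : (0:ℝ) ≤ 2 * ε * R * (R - 1) := by
      apply mul_nonneg (by positivity); linarith
    have hb : (0:ℝ) ≤ 2 * ε * R ^ 2 * (1 - ε) := by
      apply mul_nonneg (by positivity); linarith
    nlinarith [h1, h2, ha, hb, hεR]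
  have h1δ : (1:ℝ) / 2 ≤ ‖1 + (δ1 + δ2)‖ := by
    have h1 : (1:ℝ) ≤ ‖1 + (δ1 + δ2)‖ + ‖δ1 + δ2‖ := by
      calc (1:ℝ) = ‖(1:ℂ)‖ := by simp
        _ = ‖(1 + (δ1 + δ2)) - (δ1 + δ2)‖ := by norm_num
        _ ≤ ‖1 + (δ1 + δ2)‖ + ‖δ1 + δ2‖ :=
            norm_sub_le _ _
    linarith
  have h1δne : (1:ℂ) + (δ1 + δ2) ≠ 0 := by
    intro h
    rw [h] at h1δ
    simp at h1δ
    linarith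
  have hWeq : Kc + (2 * ec * Pc + ec ^ 2 * μ) = Kc * (1 + (δ1 + δ2)) := by
    rw [hδ1, hδ2]
    field_simp
  have hWne : Kc + (2 * ec * Pc + ec ^ 2 * μ) ≠ 0 := by
    rw [hWeq]
    exact mul_ne_zero hKcne h1δne
  -- the denominator in factored form
  have hD : ((‖ξ + ε⁻¹ • kE‖ ^ 2 : ℝ) : ℂ) - lam ^ 2 = ec⁻¹ ^ 2 * Kc * (1 + (δ1 + δ2)) := by
    rw [hA]
    push_cast
    rw [hδ1, hδ2, hμ, hKc, hPc, hec]
    field_simp [Complex.ofReal_ne_zero.mpr hε0.ne', Complex.ofReal_ne_zero.mpr hnk0.ne']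
    ring
  have hDne : ((‖ξ + ε⁻¹ • kE‖ ^ 2 : ℝ) : ℂ) - lam ^ 2 ≠ 0 := by
    rw [hD]
    exact mul_ne_zero (mul_ne_zero (pow_ne_zero _ (inv_ne_zero hecne)) hKcne) h1δne
  refine ⟨hDne, ?_⟩
  -- rewrite the expression using the identity
  have haux := resolvent_aux_identity ec Kc Pc μ hecne hKcne hWne
  have key : (((‖ξ + ε⁻¹ • kE‖ ^ 2 : ℝ) : ℂ) - lam ^ 2)⁻¹
          - ((ε ^ 2 / ‖kE‖ ^ 2 : ℝ) : ℂ)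
          + ((2 * ε ^ 3 * P / ‖kE‖ ^ 4 : ℝ) : ℂ)
          + ((ε ^ 4 / ‖kE‖ ^ 4 : ℝ) : ℂ) * (((‖ξ‖ ^ 2 : ℝ) : ℂ) - lam ^ 2)
          - ((4 * ε ^ 4 * P ^ 2 / ‖kE‖ ^ 6 : ℝ) : ℂ)
      = ec ^ 2 * (Kc * (ec ^ 2 * μ) * ((2 * ec * Pc + ec ^ 2 * μ) + 2 * ec * Pc)
          - (2 * ec * Pc) ^ 2 * (2 * ec * Pc + ec ^ 2 * μ))
        / (Kc ^ 3 * (Kc + (2 * ec * Pc + ec ^ 2 * μ))) := by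
    rw [hD, hδ1, hδ2]
    refine Eq.trans ?_ haux
    have hc1 : ((ε ^ 2 / ‖kE‖ ^ 2 : ℝ) : ℂ) = ec ^ 2 / Kc := by
      rw [hec, hKc]; push_cast; ring
    have hc2 : ((2 * ε ^ 3 * P / ‖kE‖ ^ 4 : ℝ) : ℂ) = 2 * ec ^ 3 * Pc / Kc ^ 2 := by
      rw [hec, hKc, hPc]; push_cast; ring
    have hc3 : ((ε ^ 4 / ‖kE‖ ^ 4 : ℝ) : ℂ) = ec ^ 4 / Kc ^ 2 := by
      rw [hec, hKc]; push_cast; ring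
    have hc4 : ((4 * ε ^ 4 * P ^ 2 / ‖kE‖ ^ 6 : ℝ) : ℂ) = 4 * ec ^ 4 * Pc ^ 2 / Kc ^ 3 := by
      rw [hec, hKc, hPc]; push_cast; ring
    have hc5 : (((‖ξ‖ ^ 2 : ℝ) : ℂ) - lam ^ 2) = μ := by
      rw [hμ]; push_cast; ring
    rw [hc1, hc2, hc3, hc4, hc5]
  rw [key]
  rw [norm_div, norm_mul, norm_pow, habsec]
  -- numerator bound
  have hnum : ‖Kc * (ec ^ 2 * μ) * ((2 * ec * Pc + ec ^ 2 * μ) + 2 * ec * Pc)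
      - (2 * ec * Pc) ^ 2 * (2 * ec * Pc + ec ^ 2 * μ)‖ ≤ 28 * ε ^ 3 * R ^ 4 * ‖kE‖ ^ 3 := by
    refine (norm_sub_le _ _).trans ?_
    have t2 : ‖Kc * (ec ^ 2 * μ) * ((2 * ec * Pc + ec ^ 2 * μ) + 2 * ec * Pc)‖
        ≤ 12 * ε ^ 3 * R ^ 4 * ‖kE‖ ^ 3 := by
      rw [norm_mul, norm_mul, habsKc]
      have t1 : ‖kE‖ ^ 2 * ‖ec ^ 2 * μ‖ ≤ ‖kE‖ ^ 2 * (2 * ε ^ 2 * R ^ 2) :=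
        mul_le_mul_of_nonneg_left hW2 (by positivity)
      calc ‖kE‖ ^ 2 * ‖ec ^ 2 * μ‖
            * ‖(2 * ec * Pc + ec ^ 2 * μ) + 2 * ec * Pc‖
          ≤ (‖kE‖ ^ 2 * (2 * ε ^ 2 * R ^ 2)) * (6 * ε * R ^ 2 * ‖kE‖) :=
            mul_le_mul t1 hWW1 (norm_nonneg _) (by positivity)
        _ = 12 * ε ^ 3 * R ^ 4 * ‖kE‖ ^ 3 := by ring
    have t4 : ‖(2 * ec * Pc) ^ 2 * (2 * ec * Pc + ec ^ 2 * μ)‖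
        ≤ 16 * ε ^ 3 * R ^ 4 * ‖kE‖ ^ 3 := by
      rw [norm_mul, norm_pow]
      have t3 : ‖2 * ec * Pc‖ ^ 2 ≤ (2 * ε * R * ‖kE‖) ^ 2 :=
        pow_le_pow_left₀ (norm_nonneg _) hW1 2
      calc ‖2 * ec * Pc‖ ^ 2 * ‖2 * ec * Pc + ec ^ 2 * μ‖
          ≤ (2 * ε * R * ‖kE‖) ^ 2 * (4 * ε * R ^ 2 * ‖kE‖) :=
            mul_le_mul t3 hWb (norm_nonneg _) (by positivity)
        _ = 16 * ε ^ 3 * R ^ 4 * ‖kE‖ ^ 3 := by ring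
    linarith
  -- denominator bound
  have hden : ‖kE‖ ^ 3 / 2 ≤ ‖Kc ^ 3 * (Kc + (2 * ec * Pc + ec ^ 2 * μ))‖ := by
    rw [norm_mul, norm_pow, habsKc, hWeq, norm_mul, habsKc]
    have h8 : ‖kE‖ ^ 3 ≤ ‖kE‖ ^ 8 := pow_le_pow_right₀ hnk1 (by norm_num)
    have h9 : ‖kE‖ ^ 8 * (1 / 2) ≤ ‖kE‖ ^ 8 * ‖1 + (δ1 + δ2)‖ :=
      mul_le_mul_of_nonneg_left h1δ (by positivity)
    calc ‖kE‖ ^ 3 / 2 ≤ ‖kE‖ ^ 8 / 2 := by linarith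
      _ ≤ ‖kE‖ ^ 8 * ‖1 + (δ1 + δ2)‖ := by linarith
      _ = (‖kE‖ ^ 2) ^ 3 * (‖kE‖ ^ 2 * ‖1 + (δ1 + δ2)‖) := by ring
  have hdenpos : (0:ℝ) < ‖Kc ^ 3 * (Kc + (2 * ec * Pc + ec ^ 2 * μ))‖ :=
    lt_of_lt_of_le (by positivity) hden
  rw [div_le_iff₀ hdenpos]
  calc ε ^ 2 * ‖Kc * (ec ^ 2 * μ) * ((2 * ec * Pc + ec ^ 2 * μ) + 2 * ec * Pc)
          - (2 * ec * Pc) ^ 2 * (2 * ec * Pc + ec ^ 2 * μ)‖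
      ≤ ε ^ 2 * (28 * ε ^ 3 * R ^ 4 * ‖kE‖ ^ 3) :=
        mul_le_mul_of_nonneg_left hnum (by positivity)
    _ = 56 * R ^ 4 * ε ^ 5 * (‖kE‖ ^ 3 / 2) := by ring
    _ ≤ 56 * R ^ 4 * ε ^ 5 * ‖Kc ^ 3 * (Kc + (2 * ec * Pc + ec ^ 2 * μ))‖ :=
        mul_le_mul_of_nonneg_left hden (by positivity)
end

section
/- Let d ≥ 1 and N ≥ 1 be integers. Every admissible finite sequence of elements of ℤ^d admits a good subsequence, i.e. a block of consecutive terms which, as a finite sequence, is good. -/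
/-- A finite sequence (list) of elements of `ℤ^d` is *admissible* (relative to a
fixed integer `N ≥ 1`) if it is destructive (its sum is nonzero) and its first
`N` terms and its last `N` terms all vanish. -/
def IsAdmissibleSeq (d N : ℕ) (l : List (Fin d → ℤ)) : Prop :=
  N ≤ l.length ∧ l.sum ≠ 0 ∧
    (∀ i < N, l.getD i 0 = 0) ∧
    (∀ i < N, l.getD (l.length - N + i) 0 = 0)

/-- A finite sequence of elements of `ℤ^d` with exactly `γ` nonzero terms is
*good* if it is admissible and its length is at most `N + Nγ + 1`. -/
def IsGoodSeq (d N : ℕ) (l : List (Fin d → ℤ)) : Prop :=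
  IsAdmissibleSeq d N l ∧
    l.length ≤ N + N * (l.countP fun x => decide (x ≠ 0)) + 1

section helpers
variable {α : Type*}

lemma getD_drop' [Inhabited α] (t : List α) (c i : ℕ) (d0 : α) :
    (t.drop c).getD i d0 = t.getD (c + i) d0 := by
  rcases lt_or_ge i (t.drop c).length with h | h
  · rw [List.getD_eq_getElem _ _ h, List.getD_eq_getElem _ _ (by simp at h; omega),
      List.getElem_drop]
  · rw [List.getD_eq_default _ _ h, List.getD_eq_default _ _ (by simp at h; omega)]

lemma getD_take' [Inhabited α] (t : List α) (k i : ℕ) (d0 : α) (h : i < k) :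
    (t.take k).getD i d0 = t.getD i d0 := by
  rcases lt_or_ge i t.length with h2 | h2
  · rw [List.getD_eq_getElem _ _ (by simp; omega), List.getD_eq_getElem _ _ h2,
      List.getElem_take]
  · rw [List.getD_eq_default _ _ (by simp; omega), List.getD_eq_default _ _ h2]

lemma window_lemma (N : ℕ) (p : α → Bool) :
    ∀ (g : ℕ) (s : List α), N * g ≤ s.length → s.countP p < g →
    ∃ j, j + N ≤ s.length ∧ ∀ x ∈ (s.drop j).take N, ¬ p x := by
  intro g
  induction g with
  | zero => intro s _ h; omega
  | succ g ih =>
    intro s hlen hcount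
    have hm : N * (g + 1) = N * g + N := Nat.mul_succ N g
    by_cases h0 : (s.take N).countP p = 0
    · refine ⟨0, by omega, ?_⟩
      intro x hx
      simp only [List.drop_zero] at hx
      exact List.countP_eq_zero.mp h0 x hx
    · have hsplit : s.countP p = (s.take N).countP p + (s.drop N).countP p := by
        conv_lhs => rw [← List.take_append_drop N s]
        exact List.countP_append ..
      have hlen' : N * g ≤ (s.drop N).length := by simp; omega
      obtain ⟨j, hj1, hj2⟩ := ih (s.drop N) hlen' (by omega)
      refine ⟨N + j, by simp at hj1; omega, ?_⟩
      rw [List.drop_drop] at hj2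
      exact hj2

lemma all_zero_block {d : ℕ} (t : List (Fin d → ℤ)) (c k : ℕ)
    (h : ∀ i, c ≤ i → i < c + k → t.getD i 0 = 0) :
    ∀ x ∈ (t.drop c).take k, x = 0 := by
  intro x hx
  obtain ⟨i, hi, hxe⟩ := List.mem_iff_getElem.mp hx
  have hi' : i < k ∧ c + i < t.length := by simp at hi; omega
  have he : ((t.drop c).take k)[i] = t[c + i]'hi'.2 := by
    rw [List.getElem_take, List.getElem_drop]
  rw [← hxe, he, ← List.getD_eq_getElem t 0 hi'.2]
  exact h (c + i) (by omega) (by omega)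

lemma all_zero_drop {d : ℕ} (t : List (Fin d → ℤ)) (c : ℕ)
    (h : ∀ i, c ≤ i → i < t.length → t.getD i 0 = 0) :
    ∀ x ∈ t.drop c, x = 0 := by
  intro x hx
  rw [← (List.take_length : (t.drop c).take (t.drop c).length = t.drop c)] at hx
  refine all_zero_block t c _ ?_ x hx
  intro i h1 h2
  simp only [List.length_drop] at h2
  exact h i h1 (by omega)

end helpers

lemma core_split (d N : ℕ) (hN : 1 ≤ N) (t : List (Fin d → ℤ))
    (hadm : IsAdmissibleSeq d N t)
    (hlong : N + N * (t.countP fun x => decide (x ≠ 0)) + 1 < t.length) :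
    ∃ a b, IsAdmissibleSeq d N ((t.drop a).take b) ∧
      ((t.drop a).take b).length < t.length := by
  obtain ⟨hlen, hsum, hfirst, hlast⟩ := hadm
  set p : (Fin d → ℤ) → Bool := fun x => decide (x ≠ 0) with hp
  set γ := t.countP p with hγdef
  set L := t.length with hLdef
  have hγ : 1 ≤ γ := by
    rcases Nat.eq_zero_or_pos γ with h0 | h; swap
    · exact h
    exfalso
    refine hsum (List.sum_eq_zero ?_)
    intro x hx
    have := List.countP_eq_zero.mp h0 x hx
    simpa [hp] using this
  have hL : N + N + 2 ≤ L := by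
    have : N * 1 ≤ N * γ := Nat.mul_le_mul_left N hγ
    omega
  by_cases hA : t.getD N 0 = 0
  · -- drop the first element
    have h01 : ∀ j ≤ N, t.getD j 0 = 0 := by
      intro j hj
      rcases eq_or_lt_of_le hj with h | h
      · rw [h]; exact hA
      · exact hfirst j h
    have hTB : (t.drop 1).take t.length = t.drop 1 :=
      List.take_of_length_le (by simp)
    refine ⟨1, t.length, ?_, ?_⟩
    · rw [hTB]
      refine ⟨by simp; omega, ?_, ?_, ?_⟩
      · have hsplit := List.sum_take_add_sum_drop t 1
        have h1 : (t.take 1).sum = 0 := by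
          apply List.sum_eq_zero
          have := all_zero_block t 0 1 (by intro i h1 h2; exact h01 i (by omega))
          simpa using this
        rw [h1, zero_add] at hsplit
        rw [hsplit]; exact hsum
      · intro i hi
        rw [getD_drop']
        exact h01 (1 + i) (by omega)
      · intro i hi
        rw [getD_drop']
        have he : 1 + ((t.drop 1).length - N + i) = t.length - N + i := by
          simp only [List.length_drop]; omega
        rw [he]
        exact hlast i hi
    · rw [hTB]; simp; omega
  by_cases hB : t.getD (L - N - 1) 0 = 0
  · -- drop the last element
    have hend : ∀ j, L - N - 1 ≤ j → j < L → t.getD j 0 = 0 := by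
      intro j h1 h2
      rcases eq_or_lt_of_le h1 with h | h
      · rw [← h]; exact hB
      · have := hlast (j - (L - N)) (by omega)
        have he : L - N + (j - (L - N)) = j := by omega
        rwa [he] at this
    refine ⟨0, L - 1, ?_, ?_⟩
    · rw [List.drop_zero]
      have hlt : (t.take (L - 1)).length = L - 1 := by simp; omega
      refine ⟨by rw [hlt]; omega, ?_, ?_, ?_⟩
      · have hsplit := List.sum_take_add_sum_drop t (L - 1)
        have h1 : (t.drop (L - 1)).sum = 0 :=
          List.sum_eq_zero (all_zero_drop t (L - 1) (fun i hi1 hi2 => hend i (by omega) hi2))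
        rw [h1, add_zero] at hsplit
        rw [hsplit]; exact hsum
      · intro i hi
        rw [getD_take' _ _ _ _ (by omega)]
        exact hfirst i hi
      · intro i hi
        rw [hlt, getD_take' _ _ _ _ (by omega)]
        exact hend (L - 1 - N + i) (by omega) (by omega)
    · rw [List.drop_zero]; simp; omega
  · -- interior window of N consecutive zeros
    have hAN : N < L := by omega
    have hBN : L - N - 1 < L := by omega
    have hA' : t[N]'hAN ≠ 0 := by
      rw [← List.getD_eq_getElem t 0 hAN]; exact hA
    have hB' : t[L - N - 1]'hBN ≠ 0 := by
      rw [← List.getD_eq_getElem t 0 hBN]; exact hB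
    set K := L - 2 * N - 2 with hKdef
    set s := (t.drop (N + 1)).take K with hsdef
    have hslen : s.length = K := by simp [hsdef]; omega
    -- counting
    have hc1 : 1 ≤ (t.take (N + 1)).countP p := by
      refine List.countP_pos_iff.mpr ⟨t[N]'hAN, ?_, by simp [hp, hA']⟩
      have : (t.take (N + 1))[N]'(by simp; omega) = t[N]'hAN := List.getElem_take ..
      rw [← this]; exact List.getElem_mem _
    have hc2 : 1 ≤ (t.drop (L - N - 1)).countP p := by
      refine List.countP_pos_iff.mpr ⟨t[L - N - 1]'hBN, ?_, by simp [hp, hB']⟩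
      have : (t.drop (L - N - 1))[0]'(by simp; omega) = t[L - N - 1 + 0]'(by omega) :=
        List.getElem_drop ..
      simp only [Nat.add_zero] at this
      rw [← this]; exact List.getElem_mem _
    have hsplit1 : γ = (t.take (N + 1)).countP p + (t.drop (N + 1)).countP p := by
      conv_lhs => rw [hγdef]
      conv_lhs => rw [← List.take_append_drop (N + 1) t]
      exact List.countP_append ..
    have hsplit2 : (t.drop (N + 1)).countP p = s.countP p + (t.drop (L - N - 1)).countP p := by
      have h1 : s ++ (t.drop (N + 1)).drop K = t.drop (N + 1) := List.take_append_drop ..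
      have h2 : (t.drop (N + 1)).drop K = t.drop (L - N - 1) := by
        rw [List.drop_drop]
        congr 1
        omega
      rw [h2] at h1
      conv_lhs => rw [← h1]
      exact List.countP_append ..
    -- apply the window lemma
    have hN1 : N * (γ - 1) + N = N * γ := by
      obtain ⟨g, hg⟩ := Nat.exists_eq_add_of_le hγ
      rw [hg]
      simp [Nat.mul_add, Nat.add_comm]
    have hwin := window_lemma N p (γ - 1) s (by omega) (by omega)
    obtain ⟨j, hj1, hj2⟩ := hwin
    rw [hslen] at hj1
    set a := N + 1 + j with hadef
    have hwblock : (s.drop j).take N = (t.drop a).take N := by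
      rw [hsdef, List.drop_take, List.drop_drop, List.take_take]
      congr 1
      omega
    have haL : a + N ≤ L - N - 1 := by omega
    have hw : ∀ x ∈ (t.drop a).take N, x = 0 := by
      intro x hx
      rw [← hwblock] at hx
      have := hj2 x hx
      simpa [hp] using this
    have hwz : ∀ i, a ≤ i → i < a + N → t.getD i 0 = 0 := by
      intro i h1 h2
      have hiL : i < L := by omega
      have hlen2 : ((t.drop a).take N).length = N := by simp; omega
      have he : ((t.drop a).take N)[i - a]'(by omega) = t[i]'hiL := by
        rw [List.getElem_take, List.getElem_drop]
        congr 1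
        omega
      rw [List.getD_eq_getElem t 0 hiL, ← he]
      exact hw _ (List.getElem_mem _)
    have hWsum : ((t.drop a).take N).sum = 0 := List.sum_eq_zero hw
    have htake : (t.take (a + N)).sum = (t.take a).sum := by
      rw [List.take_add, List.sum_append, hWsum, add_zero]
    have hsumsplit := List.sum_take_add_sum_drop t a
    by_cases hL0 : (t.take (a + N)).sum = 0
    · -- right block t.drop a has nonzero sum
      have hrs : (t.drop a).sum ≠ 0 := by
        intro h0
        rw [htake] at hL0
        rw [hL0, h0] at hsumsplit
        exact hsum (by rw [← hsumsplit]; simp)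
      have hTB : (t.drop a).take t.length = t.drop a :=
        List.take_of_length_le (by simp)
      refine ⟨a, t.length, ?_, ?_⟩
      · rw [hTB]
        refine ⟨by simp; omega, hrs, ?_, ?_⟩
        · intro i hi
          rw [getD_drop']
          exact hwz (a + i) (by omega) (by omega)
        · intro i hi
          rw [getD_drop']
          have he : a + ((t.drop a).length - N + i) = L - N + i := by
            simp only [List.length_drop]; omega
          rw [he]
          exact hlast i hi
      · rw [hTB]; simp; omega
    · -- left block t.take (a+N) has nonzero sum
      refine ⟨0, a + N, ?_, ?_⟩
      · rw [List.drop_zero]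
        have hlt : (t.take (a + N)).length = a + N := by simp; omega
        refine ⟨by omega, hL0, ?_, ?_⟩
        · intro i hi
          rw [getD_take' _ _ _ _ (by omega)]
          exact hfirst i hi
        · intro i hi
          rw [hlt, getD_take' _ _ _ _ (by omega)]
          exact hwz (a + N - N + i) (by omega) (by omega)
      · rw [List.drop_zero]; simp; omega

/-- every admissible finite sequence of elements of `ℤ^d` admits a
good subsequence, i.e. a block `(l.drop q).take m` of consecutive terms which,
as a finite sequence, is good. -/
theorem admissible_has_good_subsequence (d N : ℕ) (hd : 1 ≤ d) (hN : 1 ≤ N)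
    (l : List (Fin d → ℤ)) (hl : IsAdmissibleSeq d N l) :
    ∃ q m : ℕ, IsGoodSeq d N ((l.drop q).take m) := by
  suffices H : ∀ n (t : List (Fin d → ℤ)), t.length ≤ n → IsAdmissibleSeq d N t →
      ∃ q m : ℕ, IsGoodSeq d N ((t.drop q).take m) from H l.length l le_rfl hl
  intro n
  induction n with
  | zero =>
    intro t ht hadm
    exact absurd hadm.1 (by omega)
  | succ n ih =>
    intro t ht hadm
    by_cases hg : t.length ≤ N + N * (t.countP fun x => decide (x ≠ 0)) + 1
    · refine ⟨0, t.length, ?_⟩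
      rw [List.drop_zero, List.take_length]
      exact ⟨hadm, hg⟩
    · obtain ⟨a, b, hadm', hlt⟩ := core_split d N hN t hadm (by omega)
      obtain ⟨q, m, hgood⟩ := ih ((t.drop a).take b) (by omega) hadm'
      refine ⟨a + q, min m (b - q), ?_⟩
      have he : ((((t.drop a).take b).drop q).take m) = (t.drop (a + q)).take (min m (b - q)) := by
        rw [List.drop_take, List.drop_drop, List.take_take]
      rw [← he]
      exact hgood
end

section
/- Let d ≥ 1 and N ≥ 1 be integers. There exists an absolute constant C > 0 such that for every admissible finite sequence (k₁, …, k_ν) of elements of ℤ^d, setting σ_j = k_j + k_{j+1} + ⋯ + k_ν for 1 ≤ j ≤ ν, one has σ₁ = σ₂ = ⋯ = σ_N ≠ 0 and σ_{ν−N+1} = ⋯ = σ_ν = 0, and for every ε ∈ (0, 1]: sup_{ξ ∈ ℝ^d} ∏_{j=1}^{ν} ⟨ξ + σ_j/ε⟩^{−2} ≤ C^N·ε^{2N}. -/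
/-- for an admissible sequence `(k₀, …, k_{ν-1})` in `ℤ^d` (i.e.
destructive, with first `N` and last `N` terms zero), the tail sums
`σ_j = k_j + ⋯ + k_{ν-1}` satisfy `σ_0 = ⋯ = σ_{N-1} ≠ 0`,
`σ_{ν-N} = ⋯ = σ_{ν-1} = 0`, and the product of Japanese brackets
`⟨ξ + σ_j/ε⟩^{-2} = (1 + ‖ξ + σ_j/ε‖²)⁻¹` is bounded by `C^N ε^{2N}`
uniformly in `ξ ∈ ℝ^d` and `ε ∈ (0,1]`. -/
theorem admissible_tail_sums_product_bound (d N : ℕ) (hd : 1 ≤ d) (hN : 1 ≤ N) :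
    ∃ C > 0, ∀ (ν : ℕ) (k : ℕ → (Fin d → ℤ)),
      N ≤ ν →
      (∀ i < N, k i = 0) →
      (∀ i, ν - N ≤ i → i < ν → k i = 0) →
      (∑ ℓ ∈ Finset.range ν, k ℓ) ≠ 0 →
      let σ : ℕ → EuclideanSpace ℝ (Fin d) :=
        fun j => WithLp.toLp 2 (fun i => (((∑ ℓ ∈ Finset.Ico j ν, k ℓ) i : ℤ) : ℝ))
      ((∀ j < N, (∑ ℓ ∈ Finset.Ico j ν, k ℓ) = ∑ ℓ ∈ Finset.range ν, k ℓ) ∧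
        (∑ ℓ ∈ Finset.range ν, k ℓ) ≠ 0 ∧
        (∀ j, ν - N ≤ j → j < ν → (∑ ℓ ∈ Finset.Ico j ν, k ℓ) = 0)) ∧
      ∀ ε ∈ Set.Ioc (0 : ℝ) 1, ∀ ξ : EuclideanSpace ℝ (Fin d),
        ∏ j ∈ Finset.range ν, (1 + ‖ξ + ε⁻¹ • σ j‖ ^ 2)⁻¹
          ≤ C ^ N * ε ^ (2 * N) := by
  refine ⟨4, by norm_num, ?_⟩
  intro ν k hNν hhead htail hS σ
  -- head equality
  have hheadsum : ∀ j < N, (∑ ℓ ∈ Finset.Ico j ν, k ℓ) = ∑ ℓ ∈ Finset.range ν, k ℓ := by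
    intro j hj
    rw [Finset.range_eq_Ico,
      ← Finset.sum_Ico_consecutive _ (Nat.zero_le j) (le_trans hj.le hNν)]
    have h0 : (∑ ℓ ∈ Finset.Ico 0 j, k ℓ) = 0 := by
      apply Finset.sum_eq_zero
      intro ℓ hℓ
      exact hhead ℓ (lt_of_lt_of_le (Finset.mem_Ico.mp hℓ).2 hj.le)
    rw [h0, zero_add]
  have htailsum : ∀ j, ν - N ≤ j → j < ν → (∑ ℓ ∈ Finset.Ico j ν, k ℓ) = 0 := by
    intro j hj1 hj2
    apply Finset.sum_eq_zero
    intro ℓ hℓ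
    exact htail ℓ (le_trans hj1 (Finset.mem_Ico.mp hℓ).1) (Finset.mem_Ico.mp hℓ).2
  refine ⟨⟨hheadsum, hS, htailsum⟩, ?_⟩
  intro ε hε ξ
  obtain ⟨hε0, hε1⟩ := hε
  -- S := σ 0 has norm ≥ 1
  set S : EuclideanSpace ℝ (Fin d) := σ 0 with hSdef
  have hσ0 : (∑ ℓ ∈ Finset.Ico 0 ν, k ℓ) = ∑ ℓ ∈ Finset.range ν, k ℓ := by
    rw [Finset.range_eq_Ico]
  have hSnorm : 1 ≤ ‖S‖ := by
    obtain ⟨i, hi⟩ : ∃ i, (∑ ℓ ∈ Finset.range ν, k ℓ) i ≠ 0 := by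
      by_contra h
      push_neg at h
      exact hS (funext h)
    have h1 : (1 : ℝ) ≤ ‖S i‖ := by
      have : S i = (((∑ ℓ ∈ Finset.range ν, k ℓ) i : ℤ) : ℝ) := by
        simp only [hSdef, σ, hσ0, PiLp.toLp_apply]
      rw [this, Real.norm_eq_abs, ← Int.cast_abs]
      exact_mod_cast Int.one_le_abs hi
    calc (1 : ℝ) ≤ ‖S i‖ := h1
      _ ≤ ‖S‖ := by
        rw [EuclideanSpace.norm_eq]
        have : ‖S i‖ = Real.sqrt (‖S i‖ ^ 2) := by
          rw [Real.sqrt_sq (norm_nonneg _)]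
        rw [this]
        apply Real.sqrt_le_sqrt
        exact Finset.single_le_sum (f := fun i => ‖S i‖ ^ 2)
          (fun _ _ => sq_nonneg _) (Finset.mem_univ i)
  -- the individual factors are in (0,1]
  have hfpos : ∀ j, (0 : ℝ) < (1 + ‖ξ + ε⁻¹ • σ j‖ ^ 2)⁻¹ := fun j => by positivity
  have hfle1 : ∀ j, (1 + ‖ξ + ε⁻¹ • σ j‖ ^ 2)⁻¹ ≤ 1 := fun j => by
    rw [inv_le_one_iff₀]
    right
    nlinarith [sq_nonneg ‖ξ + ε⁻¹ • σ j‖]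
  -- key: if ‖y‖ ≥ (2ε)⁻¹ then factor ≤ 4ε²
  have key : ∀ y : EuclideanSpace ℝ (Fin d), (2 * ε)⁻¹ ≤ ‖y‖ →
      (1 + ‖y‖ ^ 2)⁻¹ ≤ 4 * ε ^ 2 := by
    intro y hy
    have h2 : (4 * ε ^ 2)⁻¹ ≤ 1 + ‖y‖ ^ 2 := by
      have : ((2 * ε)⁻¹) ^ 2 ≤ ‖y‖ ^ 2 :=
        pow_le_pow_left₀ (by positivity) hy 2
      have h3 : ((2 * ε)⁻¹) ^ 2 = (4 * ε ^ 2)⁻¹ := by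
        field_simp; ring
      nlinarith
    calc (1 + ‖y‖ ^ 2)⁻¹ ≤ ((4 * ε ^ 2)⁻¹)⁻¹ := by
          apply inv_anti₀ (by positivity) h2
      _ = 4 * ε ^ 2 := inv_inv _
  -- product over subset bound
  have main : ∀ s : Finset ℕ, s ⊆ Finset.range ν → s.card = N →
      (∀ j ∈ s, (2 * ε)⁻¹ ≤ ‖ξ + ε⁻¹ • σ j‖) →
      ∏ j ∈ Finset.range ν, (1 + ‖ξ + ε⁻¹ • σ j‖ ^ 2)⁻¹ ≤ 4 ^ N * ε ^ (2 * N) := by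
    intro s hsub hcard hbig
    have step1 : ∏ j ∈ Finset.range ν, (1 + ‖ξ + ε⁻¹ • σ j‖ ^ 2)⁻¹
        ≤ ∏ j ∈ s, (1 + ‖ξ + ε⁻¹ • σ j‖ ^ 2)⁻¹ := by
      rw [← Finset.prod_sdiff hsub]
      have hd1 : ∏ j ∈ Finset.range ν \ s, (1 + ‖ξ + ε⁻¹ • σ j‖ ^ 2)⁻¹ ≤ 1 :=
        Finset.prod_le_one (fun j _ => (hfpos j).le) (fun j _ => hfle1 j)
      have hp : (0 : ℝ) ≤ ∏ j ∈ s, (1 + ‖ξ + ε⁻¹ • σ j‖ ^ 2)⁻¹ :=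
        Finset.prod_nonneg (fun j _ => (hfpos j).le)
      nlinarith [hp, hd1, Finset.prod_nonneg (s := Finset.range ν \ s)
        (f := fun j => (1 + ‖ξ + ε⁻¹ • σ j‖ ^ 2)⁻¹) (fun j _ => (hfpos j).le)]
    have step2 : ∏ j ∈ s, (1 + ‖ξ + ε⁻¹ • σ j‖ ^ 2)⁻¹ ≤ ∏ _j ∈ s, (4 * ε ^ 2) :=
      Finset.prod_le_prod (fun j _ => (hfpos j).le)
        (fun j hj => key _ (hbig j hj))
    calc ∏ j ∈ Finset.range ν, (1 + ‖ξ + ε⁻¹ • σ j‖ ^ 2)⁻¹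
        ≤ ∏ _j ∈ s, (4 * ε ^ 2) := le_trans step1 step2
      _ = (4 * ε ^ 2) ^ N := by rw [Finset.prod_const, hcard]
      _ = 4 ^ N * ε ^ (2 * N) := by rw [mul_pow, ← pow_mul, mul_comm 2 N]
  by_cases hcase : (2 * ε)⁻¹ ≤ ‖ξ‖
  · -- use tail indices
    refine main (Finset.Ico (ν - N) ν) ?_ ?_ ?_
    · intro j hj
      rw [Finset.mem_range]
      exact (Finset.mem_Ico.mp hj).2
    · rw [Nat.card_Ico]
      omega
    · intro j hj
      obtain ⟨h1, h2⟩ := Finset.mem_Ico.mp hj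
      have : σ j = 0 := by
        ext i
        show (((∑ ℓ ∈ Finset.Ico j ν, k ℓ) i : ℤ) : ℝ) = 0
        rw [htailsum j h1 h2]
        simp
      rw [this, smul_zero, add_zero]
      exact hcase
  · -- use head indices
    push_neg at hcase
    refine main (Finset.range N) ?_ (Finset.card_range N) ?_
    · exact Finset.range_subset_range.mpr hNν
    · intro j hj
      rw [Finset.mem_range] at hj
      have hσj : σ j = S := by
        ext i
        simp only [σ, hSdef, hheadsum j hj, hσ0]
      rw [hσj]
      have hnorm : ‖ε⁻¹ • S‖ = ε⁻¹ * ‖S‖ := by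
        rw [norm_smul, Real.norm_eq_abs, abs_of_pos (by positivity)]
      have h1 : ε⁻¹ ≤ ‖ε⁻¹ • S‖ := by
        rw [hnorm]
        nlinarith [inv_pos.mpr hε0]
      have h2 : ‖ε⁻¹ • S‖ ≤ ‖ξ + ε⁻¹ • S‖ + ‖ξ‖ := by
        calc ‖ε⁻¹ • S‖ = ‖(ξ + ε⁻¹ • S) - ξ‖ := by rw [add_sub_cancel_left]
          _ ≤ ‖ξ + ε⁻¹ • S‖ + ‖ξ‖ := norm_sub_le _ _
      have h3 : (2 * ε)⁻¹ = ε⁻¹ - (2 * ε)⁻¹ := by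
        field_simp; ring
      linarith
end

section
/- There exists r₀ ∈ (0, 1) such that for every real n > 0, every μ ∈ ℂ with |μ| ≥ 2 and f_n(μ) = 0, every r ∈ (0, r₀] and every θ ∈ ℝ: |f_n(μ + r·e^{iθ})| ≥ 3r. -/
/-- uniform lower bound for `f_n(λ) = 4 - e^{2iλ}/(16n²λ²)` on
small circles around any zero `μ` with `|μ| ≥ 2`. -/
theorem fn_lower_bound_on_circles :
    ∃ r₀ ∈ Set.Ioo (0 : ℝ) 1, ∀ n : ℝ, 0 < n → ∀ μ : ℂ, 2 ≤ ‖μ‖ →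
      4 - Complex.exp (2 * Complex.I * μ) / (16 * (n : ℂ) ^ 2 * μ ^ 2) = 0 →
      ∀ r : ℝ, r ∈ Set.Ioc (0 : ℝ) r₀ → ∀ θ : ℝ,
        3 * r ≤ ‖4 - Complex.exp (2 * Complex.I * (μ + r * Complex.exp (Complex.I * θ)))
          / (16 * (n : ℂ) ^ 2 * (μ + r * Complex.exp (Complex.I * θ)) ^ 2)‖ := by
  refine ⟨1/50, ⟨by norm_num, by norm_num⟩, ?_⟩
  intro n hn μ hμ hzero r ⟨hr0, hr1⟩ θ
  set z : ℂ := (r : ℂ) * Complex.exp (Complex.I * θ) with hzdef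
  have hzabs : ‖z‖ = r := by
    simp [hzdef, Complex.norm_exp, abs_of_pos hr0]
  set ν : ℂ := μ + z with hνdef
  have hn0 : (n : ℂ) ≠ 0 := by exact_mod_cast hn.ne'
  have hμ0 : μ ≠ 0 := by
    intro h; rw [h] at hμ; simp at hμ; linarith
  have hνabs : 1 ≤ ‖ν‖ := by
    have t : ‖μ‖ - ‖-z‖ ≤ ‖μ - -z‖ := norm_sub_norm_le μ (-z)
    simp only [sub_neg_eq_add, norm_neg, hzabs] at t
    rw [hνdef]
    linarith
  have hν0 : ν ≠ 0 := by
    intro h; rw [h] at hνabs; simp at hνabs; linarith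
  -- zero condition
  have hexp : Complex.exp (2 * Complex.I * μ) = 64 * (n : ℂ) ^ 2 * μ ^ 2 := by
    have h16 : (16 : ℂ) * (n : ℂ) ^ 2 * μ ^ 2 ≠ 0 := by
      simp [hn0, hμ0]
    field_simp at hzero
    linear_combination -hzero
  -- key identity
  have hkey : 4 - Complex.exp (2 * Complex.I * ν) / (16 * (n : ℂ) ^ 2 * ν ^ 2)
      = 4 * (ν ^ 2 - Complex.exp (2 * Complex.I * z) * μ ^ 2) / ν ^ 2 := by
    have hsplit : Complex.exp (2 * Complex.I * ν)
        = Complex.exp (2 * Complex.I * μ) * Complex.exp (2 * Complex.I * z) := by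
      rw [← Complex.exp_add, hνdef]; ring_nf
    rw [hsplit, hexp]
    field_simp
    ring
  rw [hkey, norm_div, norm_mul]
  have hν2 : (0:ℝ) < ‖ν ^ 2‖ := by
    simpa using pow_pos (lt_of_lt_of_le one_pos hνabs) 2
  rw [le_div_iff₀ hν2]
  -- R bound
  set R : ℂ := Complex.exp (2 * Complex.I * z) - 1 - 2 * Complex.I * z with hRdef
  have hRbound : ‖R‖ ≤ 4 * r ^ 2 := by
    have h3 : ‖2 * Complex.I * z‖ = 2 * r := by
      simp only [norm_mul, Complex.norm_two, Complex.norm_I, hzabs]; ring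
    have h1 : ‖2 * Complex.I * z‖ ≤ 1 := by rw [h3]; linarith
    have h2 := Complex.norm_exp_sub_one_sub_id_le h1
    rw [h3] at h2
    rw [hRdef]
    nlinarith [h2]
  -- decompose D
  have hD : ν ^ 2 - Complex.exp (2 * Complex.I * z) * μ ^ 2
      = 2 * μ * z * (1 - Complex.I * μ) + z ^ 2 - R * μ ^ 2 := by
    rw [hRdef, hνdef]; ring
  set m := ‖μ‖ with hm
  -- lower bound for the main term
  have hmain : 2 * m * r * (m - 1) ≤ ‖2 * μ * z * (1 - Complex.I * μ)‖ := by
    have h1 : m - 1 ≤ ‖1 - Complex.I * μ‖ := by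
      have h := norm_sub_norm_le (Complex.I * μ) 1
      rw [norm_sub_rev] at h
      simp only [norm_mul, Complex.norm_I, one_mul, norm_one] at h
      linarith
    have hpos : (0:ℝ) ≤ 2 * m * r := by positivity
    have heq : ‖2 * μ * z * (1 - Complex.I * μ)‖
        = 2 * m * r * ‖1 - Complex.I * μ‖ := by
      rw [norm_mul, norm_mul, norm_mul, Complex.norm_two, hzabs]
    rw [heq]
    exact mul_le_mul_of_nonneg_left h1 hpos
  -- lower bound for |D|
  have hDlow : 2 * m * r * (m - 1) - r ^ 2 - 4 * r ^ 2 * m ^ 2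
      ≤ ‖ν ^ 2 - Complex.exp (2 * Complex.I * z) * μ ^ 2‖ := by
    rw [hD]
    have t1 := norm_sub_norm_le (2 * μ * z * (1 - Complex.I * μ)) (R * μ ^ 2 - z ^ 2)
    have he : (2 * μ * z * (1 - Complex.I * μ)) - (R * μ ^ 2 - z ^ 2)
        = 2 * μ * z * (1 - Complex.I * μ) + z ^ 2 - R * μ ^ 2 := by ring
    rw [he] at t1
    have t2 := norm_sub_le (R * μ ^ 2) (z ^ 2)
    have hz2 : ‖z ^ 2‖ = r ^ 2 := by rw [norm_pow, hzabs]
    have hRμ : ‖R * μ ^ 2‖ ≤ 4 * r ^ 2 * m ^ 2 := by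
      rw [norm_mul, norm_pow]
      have hmnn : (0:ℝ) ≤ m ^ 2 := by positivity
      nlinarith [norm_nonneg R]
    rw [hz2] at t2
    linarith
  -- upper bound for |ν|²
  have hνup : ‖ν ^ 2‖ ≤ (m + r) ^ 2 := by
    rw [norm_pow]
    have h1 : ‖ν‖ ≤ m + r := by
      have := norm_add_le μ z
      rw [hzabs] at this; exact this
    have h0 : (0:ℝ) ≤ ‖ν‖ := norm_nonneg ν
    nlinarith
  -- final polynomial inequality
  have hm2 : 2 ≤ m := hμ
  have habs4 : ‖(4 : ℂ)‖ = 4 := by norm_num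
  rw [habs4]
  have hr50 : r ≤ 1/50 := hr1
  have hb : 0 ≤ 5*m^2 - 8*m - 4*r - 16*r*m^2 - 6*m*r - 3*r^2 := by
    nlinarith [mul_nonneg (sub_nonneg.2 hr50) (sq_nonneg m), sq_nonneg (m - 2),
      mul_nonneg hr0.le (sub_nonneg.2 hm2), sq_nonneg m]
  have hfinal : 3 * r * (m + r) ^ 2 ≤ 4 * (2 * m * r * (m - 1) - r ^ 2 - 4 * r ^ 2 * m ^ 2) := by
    nlinarith [mul_nonneg hr0.le hb]
  calc 3 * r * ‖ν ^ 2‖ ≤ 3 * r * (m + r) ^ 2 := by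
        apply mul_le_mul_of_nonneg_left hνup (by positivity)
    _ ≤ 4 * (2 * m * r * (m - 1) - r ^ 2 - 4 * r ^ 2 * m ^ 2) := hfinal
    _ ≤ 4 * ‖ν ^ 2 - Complex.exp (2 * Complex.I * z) * μ ^ 2‖ := by linarith
end
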